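/- arXiv:0710.4007 — 8 statements merged into one kernel-verified Lean document; each statement's English description precedes it below -/
import Mathlib

section
/- Let 1 ≤ p ≤ k and d ≥ 2 be integers, and let f₁, …, f_p : ℂ^k → ℂ be polynomials of degree at most d. Write f_j = f_j⁺ + g_j, where f_j⁺ is the homogeneous part of degree d of f_j and deg g_j ≤ d − 1. Write points of ℂ^k as z = (z', z'') ∈ ℂ^p × ℂ^{k−p}, and assume that every common zero of f₁⁺, …, f_p⁺ lies in {z' = 0}. Then there exists R₀ > 0 such that for every R ≥ R₀ and every z = (z', z'') with R/2 ≤ ‖z'‖ ≤ R and ‖z''‖ ≤ R, one has ‖(f₁(z), …, f_p(z))‖ > R. -/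
open MvPolynomial

/-!
Write `F = F⁺ + G` with `F⁺` the top-degree part. Since the common zeros of `F⁺` lie in
`{z' = 0}`, the continuous function `‖F⁺‖` has a positive minimum `c` on the compact shell
`{1/2 ≤ ‖w'‖ ≤ 1, ‖w''‖ ≤ 1}`; rescaling by `R` and homogeneity give `‖F⁺(z)‖ ≥ c R^d` on the
`R`-shell, while the lower-order part satisfies `‖G(z)‖ ≤ C R^(d-1)`. As `d ≥ 2`, the difference
`c R^d - C R^(d-1)` exceeds `R` for large `R`.
-/

namespace MvPolynomial

theorem norm_eval_le_of_totalDegree_le {σ 𝕜 : Type*} [NormedField 𝕜] {P : MvPolynomial σ 𝕜}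
    {m : ℕ} (hP : P.totalDegree ≤ m) {z : σ → 𝕜} {M : ℝ} (hM : 1 ≤ M) (hz : ∀ i, ‖z i‖ ≤ M) :
    ‖eval z P‖ ≤ (∑ s ∈ P.support, ‖coeff s P‖) * M ^ m := by
  rw [eval_eq, Finset.sum_mul]
  grw [norm_sum_le]
  refine Finset.sum_le_sum fun s hs ↦ ?_
  rw [norm_mul, norm_prod]
  gcongr
  calc ∏ i ∈ s.support, ‖z i ^ s i‖ ≤ ∏ i ∈ s.support, M ^ s i := by
        gcongr with i; rw [norm_pow]; gcongr; exact hz i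
    _ = M ^ s.degree := Finset.prod_pow_eq_pow_sum _ _ _
    _ ≤ M ^ m := pow_le_pow_right₀ hM ((le_totalDegree hs).trans hP)

theorem IsHomogeneous.eval_smul {σ R : Type*} [CommSemiring R] {P : MvPolynomial σ R} {n : ℕ}
    (hP : P.IsHomogeneous n) (c : R) (z : σ → R) : eval (c • z) P = c ^ n * eval z P := by
  rw [eval_eq, eval_eq, Finset.mul_sum]
  refine Finset.sum_congr rfl fun s hs ↦ ?_
  simp only [Pi.smul_apply, smul_eq_mul, mul_pow, Finset.prod_mul_distrib,
    Finset.prod_pow_eq_pow_sum, ← hP.degree_eq_sum_deg_support hs]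
  ring

theorem totalDegree_sub_homogeneousComponent_le {σ R : Type*} [CommRing R] {P : MvPolynomial σ R}
    {n : ℕ} (hP : P.totalDegree ≤ n) : (P - homogeneousComponent n P).totalDegree ≤ n - 1 := by
  refine Finset.sup_le fun s hs ↦ ?_
  rw [mem_support_iff, coeff_sub, coeff_homogeneousComponent] at hs
  have hne : s.degree ≠ n := fun h ↦ hs (by simp [h])
  have hle : s.degree ≤ n := (le_totalDegree (mem_support_iff.2 (by simpa [hne] using hs))).trans hP
  change s.degree ≤ n - 1
  omega

end MvPolynomial

theorem EuclideanSpace.norm_le_sum_norm {𝕜 ι : Type*} [RCLike 𝕜] [Fintype ι]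
    (x : EuclideanSpace 𝕜 ι) : ‖x‖ ≤ ∑ i, ‖x i‖ := by
  rw [EuclideanSpace.norm_eq, Real.sqrt_le_left (by positivity)]
  exact Finset.sum_sq_le_sq_sum_of_nonneg fun i _ ↦ norm_nonneg _

section evalEuclidean

variable {𝕜 σ ι : Type*} [RCLike 𝕜]

noncomputable def evalEuclidean (F : ι → MvPolynomial σ 𝕜) (z : σ → 𝕜) : EuclideanSpace 𝕜 ι :=
  WithLp.toLp 2 fun j ↦ eval z (F j)

theorem continuous_evalEuclidean (F : ι → MvPolynomial σ 𝕜) : Continuous (evalEuclidean F) :=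
  (PiLp.continuous_toLp 2 _).comp (continuous_pi fun j ↦ continuous_eval (F j))

theorem evalEuclidean_add (F G : ι → MvPolynomial σ 𝕜) (z : σ → 𝕜) :
    evalEuclidean (F + G) z = evalEuclidean F z + evalEuclidean G z := by
  ext j
  simp [evalEuclidean]

theorem norm_evalEuclidean_ofReal_smul [Fintype ι] {F : ι → MvPolynomial σ 𝕜} {d : ℕ}
    (hF : ∀ j, (F j).IsHomogeneous d) {R : ℝ} (hR : 0 ≤ R) (z : σ → 𝕜) :
    ‖evalEuclidean F ((R : 𝕜) • z)‖ = R ^ d * ‖evalEuclidean F z‖ := by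
  have : evalEuclidean F ((R : 𝕜) • z) = (R : 𝕜) ^ d • evalEuclidean F z := by
    ext j
    simp only [evalEuclidean, (hF j).eval_smul, PiLp.smul_apply, smul_eq_mul]
  rw [this, norm_smul, norm_pow, RCLike.norm_ofReal, abs_of_nonneg hR]

theorem exists_norm_evalEuclidean_le [Fintype ι] {G : ι → MvPolynomial σ 𝕜} {m : ℕ}
    (hG : ∀ j, (G j).totalDegree ≤ m) :
    ∃ C, ∀ (M : ℝ) (z : σ → 𝕜), 1 ≤ M → (∀ i, ‖z i‖ ≤ M) → ‖evalEuclidean G z‖ ≤ C * M ^ m := by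
  refine ⟨∑ j, ∑ s ∈ (G j).support, ‖coeff s (G j)‖, fun M z hM hz ↦ ?_⟩
  grw [EuclideanSpace.norm_le_sum_norm, Finset.sum_mul]
  exact Finset.sum_le_sum fun j _ ↦ norm_eval_le_of_totalDegree_le (hG j) hM hz

end evalEuclidean

section Shell

variable {𝕜 α β ι : Type*} [RCLike 𝕜] [Fintype α] [Fintype β] [Fintype ι]
  {F : ι → MvPolynomial (α ⊕ β) 𝕜}

theorem exists_pos_le_norm_evalEuclidean_of_norm_le_one
    (hzero : ∀ z : α ⊕ β → 𝕜, (∀ j, eval z (F j) = 0) → ∀ i, z (Sum.inl i) = 0)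
    {r : ℝ} (hr : 0 < r) :
    ∃ c > 0, ∀ (w' : EuclideanSpace 𝕜 α) (w'' : EuclideanSpace 𝕜 β),
      r ≤ ‖w'‖ → ‖w'‖ ≤ 1 → ‖w''‖ ≤ 1 → c ≤ ‖evalEuclidean F (Sum.elim w'.ofLp w''.ofLp)‖ := by
  set φ : EuclideanSpace 𝕜 α × EuclideanSpace 𝕜 β → ℝ :=
    fun w ↦ ‖evalEuclidean F (Sum.elim w.1.ofLp w.2.ofLp)‖
  have hφ : Continuous φ := by
    refine ((continuous_evalEuclidean F).comp (continuous_pi fun i ↦ ?_)).norm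
    cases i with
    | inl i => exact (continuous_apply i).comp ((PiLp.continuous_ofLp 2 _).comp continuous_fst)
    | inr i => exact (continuous_apply i).comp ((PiLp.continuous_ofLp 2 _).comp continuous_snd)
  set K : Set (EuclideanSpace 𝕜 α × EuclideanSpace 𝕜 β) :=
    (Metric.closedBall 0 1 ×ˢ Metric.closedBall 0 1) ∩ {w | r ≤ ‖w.1‖}
  have hK : IsCompact K := ((isCompact_closedBall 0 1).prod (isCompact_closedBall 0 1)).inter_right
    (isClosed_le continuous_const continuous_fst.norm)
  have hpos : ∀ w ∈ K, 0 < φ w := by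
    rintro ⟨w', w''⟩ ⟨-, hw'⟩
    refine norm_pos_iff.2 fun h ↦ ?_
    have : w' = 0 := by
      ext i
      exact hzero _ (fun j ↦ congr($h j)) i
    have : r ≤ 0 := by simpa [this] using hw'
    linarith
  obtain ⟨c, hc, hcK⟩ := hK.exists_forall_le' hφ.continuousOn hpos
  exact ⟨c, hc, fun w' w'' hw'₁ hw'₂ hw'' ↦ hcK (w', w'') ⟨⟨by simpa, by simpa⟩, hw'₁⟩⟩

theorem exists_pos_mul_pow_le_norm_evalEuclidean {d : ℕ} (hF : ∀ j, (F j).IsHomogeneous d)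
    (hzero : ∀ z : α ⊕ β → 𝕜, (∀ j, eval z (F j) = 0) → ∀ i, z (Sum.inl i) = 0)
    {r : ℝ} (hr : 0 < r) :
    ∃ c > 0, ∀ R > 0, ∀ (z' : EuclideanSpace 𝕜 α) (z'' : EuclideanSpace 𝕜 β),
      r * R ≤ ‖z'‖ → ‖z'‖ ≤ R → ‖z''‖ ≤ R →
      c * R ^ d ≤ ‖evalEuclidean F (Sum.elim z'.ofLp z''.ofLp)‖ := by
  obtain ⟨c, hc, hcK⟩ := exists_pos_le_norm_evalEuclidean_of_norm_le_one hzero hr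
  refine ⟨c, hc, fun R hR z' z'' hz'₁ hz'₂ hz'' ↦ ?_⟩
  have hscale : Sum.elim z'.ofLp z''.ofLp =
      (R : 𝕜) • Sum.elim ((R : 𝕜)⁻¹ • z').ofLp ((R : 𝕜)⁻¹ • z'').ofLp := by
    ext (i | i) <;> simp [hR.ne']
  rw [hscale, norm_evalEuclidean_ofReal_smul hF hR.le, mul_comm]
  gcongr
  apply hcK <;> simp only [norm_smul, norm_inv, RCLike.norm_ofReal, abs_of_pos hR]
  · rw [le_inv_mul_iff₀ hR]; linarith
  · rw [inv_mul_le_iff₀ hR, mul_one]; exact hz'₂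
  · rw [inv_mul_le_iff₀ hR, mul_one]; exact hz''

end Shell

theorem exists_lt_mul_pow_sub_mul_pow {c : ℝ} (hc : 0 < c) (C : ℝ) {d : ℕ} (hd : 2 ≤ d) :
    ∃ R₀ ≥ 1, ∀ R ≥ R₀, R < c * R ^ d - C * R ^ (d - 1) := by
  refine ⟨max 1 ((2 + C) / c), le_max_left _ _, fun R hR ↦ ?_⟩
  have hR1 : 1 ≤ R := (le_max_left _ _).trans hR
  have hcR : 2 + C ≤ c * R := (div_le_iff₀' hc).1 ((le_max_right _ _).trans hR)
  have hpow : R ≤ R ^ (d - 1) := le_self_pow₀ hR1 (by omega)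
  calc R < 2 * R := by linarith
    _ ≤ (c * R - C) * R ^ (d - 1) := by nlinarith
    _ = c * R ^ d - C * R ^ (d - 1) := by rw [← mul_pow_sub_one (by omega : d ≠ 0) R]; ring

theorem stmt_1_general (k p d : ℕ) (hd : 2 ≤ d)
    (f : Fin p → MvPolynomial (Fin p ⊕ Fin (k - p)) ℂ)
    (hdeg : ∀ j, (f j).totalDegree ≤ d)
    (hzero : ∀ z : (Fin p ⊕ Fin (k - p)) → ℂ,
      (∀ j, eval z (homogeneousComponent d (f j)) = 0) → ∀ i : Fin p, z (Sum.inl i) = 0) :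
    ∃ R₀ > 0, ∀ R : ℝ, R₀ ≤ R →
      ∀ (z' : EuclideanSpace ℂ (Fin p)) (z'' : EuclideanSpace ℂ (Fin (k - p))),
        R / 2 ≤ ‖z'‖ → ‖z'‖ ≤ R → ‖z''‖ ≤ R →
        R < ‖(WithLp.equiv 2 ((j : Fin p) → ℂ)).symm (fun j =>
            eval (Sum.elim (WithLp.equiv 2 ((i : Fin p) → ℂ) z')
              (WithLp.equiv 2 ((i : Fin (k - p)) → ℂ) z'')) (f j))‖ := by
  set F := fun j ↦ homogeneousComponent d (f j)
  set G := fun j ↦ f j - homogeneousComponent d (f j)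
  obtain ⟨c, hc, hFlow⟩ := exists_pos_mul_pow_le_norm_evalEuclidean
    (fun j ↦ homogeneousComponent_isHomogeneous d (f j)) hzero (r := 1 / 2) (by norm_num)
  obtain ⟨C, hGup⟩ := exists_norm_evalEuclidean_le (G := G)
    fun j ↦ totalDegree_sub_homogeneousComponent_le (hdeg j)
  obtain ⟨R₀, hR₀, hR₀lt⟩ := exists_lt_mul_pow_sub_mul_pow hc C hd
  refine ⟨R₀, by linarith, fun R hR z' z'' hz'₁ hz'₂ hz'' ↦ ?_⟩
  set z := Sum.elim z'.ofLp z''.ofLp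
  have hz : ∀ i, ‖z i‖ ≤ R := by
    rintro (i | i)
    exacts [(PiLp.norm_apply_le z' i).trans hz'₂, (PiLp.norm_apply_le z'' i).trans hz'']
  have hFG : F + G = f := funext fun j ↦ add_sub_cancel _ _
  change R < ‖evalEuclidean f z‖
  calc R < c * R ^ d - C * R ^ (d - 1) := hR₀lt R hR
    _ ≤ ‖evalEuclidean F z‖ - ‖evalEuclidean G z‖ :=
      sub_le_sub (hFlow R (by linarith) z' z'' (by linarith) hz'₂ hz'')
        (hGup R z (by linarith) hz)
    _ ≤ ‖evalEuclidean f z‖ := by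
      rw [← hFG, evalEuclidean_add]
      linarith [norm_le_add_norm_add (evalEuclidean F z) (evalEuclidean G z)]

/-- **Escape estimate for regular polynomial maps.** Let `f₁, …, f_p` be polynomials of degree
at most `d` on `ℂ^k = ℂ^p × ℂ^{k−p}` whose degree-`d` homogeneous parts have no common zero
outside `{z' = 0}`. Then there is `R₀ > 0` such that for `R ≥ R₀` and every `z = (z', z'')` with
`R/2 ≤ ‖z'‖ ≤ R` and `‖z''‖ ≤ R`, one has `‖(f₁(z), …, f_p(z))‖ > R`. -/
theorem stmt_1 (k p d : ℕ) (hp : 1 ≤ p) (hpk : p ≤ k) (hd : 2 ≤ d)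
    (f : Fin p → MvPolynomial (Fin p ⊕ Fin (k - p)) ℂ)
    (hdeg : ∀ j, (f j).totalDegree ≤ d)
    (hzero : ∀ z : (Fin p ⊕ Fin (k - p)) → ℂ,
      (∀ j, eval z (homogeneousComponent d (f j)) = 0) → ∀ i : Fin p, z (Sum.inl i) = 0) :
    ∃ R₀ > 0, ∀ R : ℝ, R₀ ≤ R →
      ∀ (z' : EuclideanSpace ℂ (Fin p)) (z'' : EuclideanSpace ℂ (Fin (k - p))),
        R / 2 ≤ ‖z'‖ → ‖z'‖ ≤ R → ‖z''‖ ≤ R →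
        R < ‖(WithLp.equiv 2 ((j : Fin p) → ℂ)).symm (fun j =>
            eval (Sum.elim (WithLp.equiv 2 ((i : Fin p) → ℂ) z')
              (WithLp.equiv 2 ((i : Fin (k - p)) → ℂ) z'')) (f j))‖ :=
  stmt_1_general k p d hd f hdeg hzero
end

section
/- Let ℂ^k = E ⊕ F = Ẽ ⊕ F̃ be two direct-sum decompositions into complex-linear subspaces with dim_ℂ E = dim_ℂ Ẽ, and let π̃', π̃'' be the projections onto Ẽ and F̃ associated with the second decomposition. Let a, b, κ, ε, s be positive reals with b ≤ a, ε ≤ 1 and 2κ < a. Let h : {v ∈ E : ‖v‖ < s} → F be holomorphic with h(0) = 0 and ‖h(v₁) − h(v₂)‖ ≤ ε‖v₁ − v₂‖ for all v₁, v₂, and set Γ := {v + h(v) : v ∈ E, ‖v‖ < s}. Let g be a holomorphic map from an open subset of ℂ^k containing Γ into ℂ^k, of the form g = l + r, where l is complex-linear with l(E) ⊆ Ẽ, l(F) ⊆ F̃, ‖l(v)‖ ≥ a‖v‖ for all v ∈ E and ‖l(u)‖ ≤ b‖u‖ for all u ∈ F, and where r satisfies r(0) = 0 and ‖π̃'(r(x))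 − π̃'(r(y))‖ ≤ κ‖x − y‖ and ‖π̃''(r(x)) − π̃''(r(y))‖ ≤ κ‖x − y‖ for all x, y ∈ Γ. Then there exists a holomorphic map h̃ : {ṽ ∈ Ẽ : ‖ṽ‖ < (a − 2κ)s} → F̃ with h̃(0) = 0, with ‖h̃(ṽ₁) − h̃(ṽ₂)‖ ≤ ((bε + 2κ)/(a − 2κ))‖ṽ₁ − ṽ₂‖ for all ṽ₁, ṽ₂, and such that {ṽ + h̃(ṽ) : ṽ ∈ Ẽ, ‖ṽ‖ < (a − 2κ)s} ⊆ g(Γ). -/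
/-!
Parametrize `Γ` by `x v = v + h v`. The `Ẽ`-component `Φ v = π̃' (g (x v))` is the linear map
`l|E`, which expands by `a`, plus a `2κ`-Lipschitz perturbation (`x` is `2`-Lipschitz because
`ε ≤ 1`). By the contraction principle `Φ` maps the ball of radius `s` bijectively onto a set
containing the ball of radius `(a - 2κ) s`, with `(a - 2κ)⁻¹`-Lipschitz inverse; this inverse is
holomorphic since the derivative of `Φ` is again `(a - 2κ)`-expanding, hence invertible. The
`F̃`-component `Ψ v = π̃'' (g (x v))` is `(bε + 2κ)`-Lipschitz, and `h̃ = Ψ ∘ Φ⁻¹` works because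
`g (x v) = Φ v + Ψ v`.
-/

open Set Filter Topology Metric Function
open scoped NNReal

def graphOver {k : ℕ} (E F : Submodule ℂ (EuclideanSpace ℂ (Fin k))) (h : E → F) (s : ℝ) :
    Set (EuclideanSpace ℂ (Fin k)) :=
  (fun v : E => (v : EuclideanSpace ℂ (Fin k)) + (h v : EuclideanSpace ℂ (Fin k))) ''
    Metric.ball 0 s

section LocalInverse

variable {𝕜 : Type*} [NontriviallyNormedField 𝕜]
  {E F G : Type*} [NormedAddCommGroup E] [NormedSpace 𝕜 E] [NormedAddCommGroup F]
  [NormedSpace 𝕜 F] [NormedAddCommGroup G] [NormedSpace 𝕜 G] {f : E → F} {a : ℝ} {K : ℝ≥0}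

theorem ApproximatesLinearOn.sub_mul_norm_sub_le {L : E →L[𝕜] F} {s : Set E}
    (hf : ApproximatesLinearOn f L s K) (hL : ∀ v, a * ‖v‖ ≤ ‖L v‖) {x y : E} (hx : x ∈ s)
    (hy : y ∈ s) : (a - K) * ‖x - y‖ ≤ ‖f x - f y‖ := by
  linarith [hf x hx y hy, hL (x - y), norm_le_norm_add_norm_sub (f x - f y) (L (x - y))]

theorem ApproximatesLinearOn.sub_mul_norm_le_norm_apply_of_hasFDerivAt {L : E →L[𝕜] F}
    {s : Set E} (hf : ApproximatesLinearOn f L s K) (hL : ∀ v, a * ‖v‖ ≤ ‖L v‖) {x : E}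
    (hs : s ∈ 𝓝 x) {A : E →L[𝕜] F} (hA : HasFDerivAt f A x) (w : E) : (a - K) * ‖w‖ ≤ ‖A w‖ := by
  have hAL : ‖A - L‖ ≤ K :=
    (hA.sub L.hasFDerivAt).le_of_lipschitzOn hs (approximatesLinearOn_iff_lipschitzOnWith.1 hf)
  have := norm_le_norm_add_norm_sub (A w) (L w)
  have := (A - L).le_of_opNorm_le hAL w
  simp only [sub_apply] at this
  linarith [hL w]

theorem ApproximatesLinearOn.surjOn_ball [CompleteSpace E] {L : E ≃L[𝕜] F} {s : ℝ}
    (hf : ApproximatesLinearOn f (L : E →L[𝕜] F) (ball 0 s) K) (ha : 0 < a)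
    (hL : ∀ v, a * ‖v‖ ≤ ‖L v‖) (hKa : K < a) (hf0 : f 0 = 0) :
    SurjOn f (ball 0 s) (ball 0 ((a - K) * s)) := by
  intro y hy
  rw [mem_ball_zero_iff] at hy
  have hc : 0 < a - K := sub_pos.2 hKa
  have hεs : ‖y‖ / (a - K) < s := (div_lt_iff₀ hc).2 (by linarith)
  let R : (L : E →L[𝕜] F).NonlinearRightInverse :=
    { toFun := L.symm
      nnnorm := ⟨a⁻¹, by positivity⟩
      bound' := fun z => by
        show ‖L.symm z‖ ≤ a⁻¹ * ‖z‖
        rw [← div_eq_inv_mul, le_div_iff₀ ha, mul_comm]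
        simpa using hL (L.symm z)
      right_inv' := L.apply_symm_apply }
  have hR : ((R.nnnorm : ℝ)⁻¹ - K) * (‖y‖ / (a - K)) = ‖y‖ := by
    show (a⁻¹⁻¹ - K) * (‖y‖ / (a - K)) = ‖y‖
    rw [inv_inv]; field_simp
  obtain ⟨x, hx, rfl⟩ := hf.surjOn_closedBall_of_nonlinearRightInverse R (by positivity)
    (closedBall_subset_ball hεs) (by rw [hf0, hR]; exact mem_closedBall_zero_iff.2 le_rfl)
  exact ⟨x, closedBall_subset_ball hεs hx, rfl⟩

theorem norm_sub_le_of_rightInvOn {c : ℝ} (hc : 0 < c) {s : Set E} {t : Set F} {u : F → E}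
    (hexp : ∀ x ∈ s, ∀ y ∈ s, c * ‖x - y‖ ≤ ‖f x - f y‖) (hu : MapsTo u t s)
    (hfu : RightInvOn u f t) {y₁ y₂ : F} (hy₁ : y₁ ∈ t) (hy₂ : y₂ ∈ t) :
    ‖u y₁ - u y₂‖ ≤ c⁻¹ * ‖y₁ - y₂‖ := by
  have := hexp _ (hu hy₁) _ (hu hy₂)
  rw [hfu hy₁, hfu hy₂] at this
  rw [← div_eq_inv_mul, le_div_iff₀ hc, mul_comm]
  exact this

theorem differentiableAt_of_local_left_inverse_of_injective [CompleteSpace 𝕜]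
    [FiniteDimensional 𝕜 E] [FiniteDimensional 𝕜 F]
    (hdim : Module.finrank 𝕜 E = Module.finrank 𝕜 F) {u : F → E} {y : F}
    {A : E →L[𝕜] F} (hA : Injective A) (hf : HasFDerivAt f A (u y)) (hu : ContinuousAt u y)
    (hfu : ∀ᶠ z in 𝓝 y, f (u z) = z) : DifferentiableAt 𝕜 u y :=
  (HasFDerivAt.of_local_left_inverse
    (f' := ((A : E →ₗ[𝕜] F).linearEquivOfInjective hA hdim).toContinuousLinearEquiv) hu hf
    hfu).differentiableAt

theorem ApproximatesLinearOn.injective_of_hasFDerivAt {L : E →L[𝕜] F} {s : Set E}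
    (hf : ApproximatesLinearOn f L s K) (hL : ∀ v, a * ‖v‖ ≤ ‖L v‖) (hKa : K < a) {x : E}
    (hs : s ∈ 𝓝 x) {A : E →L[𝕜] F} (hA : HasFDerivAt f A x) : Injective A := by
  refine (injective_iff_map_eq_zero A).2 fun w hw => norm_le_zero_iff.1 ?_
  have := hf.sub_mul_norm_le_norm_apply_of_hasFDerivAt hL hs hA w
  rw [hw, norm_zero] at this
  exact nonpos_of_mul_nonpos_right this (sub_pos.2 hKa)

variable {L : E ≃L[𝕜] F} {s : ℝ}

theorem ApproximatesLinearOn.norm_invFunOn_sub_le [CompleteSpace E]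
    (hf : ApproximatesLinearOn f (L : E →L[𝕜] F) (ball 0 s) K) (ha : 0 < a)
    (hL : ∀ v, a * ‖v‖ ≤ ‖L v‖) (hKa : K < a) (hf0 : f 0 = 0) {y₁ y₂ : F}
    (hy₁ : y₁ ∈ ball 0 ((a - K) * s)) (hy₂ : y₂ ∈ ball 0 ((a - K) * s)) :
    ‖invFunOn f (ball 0 s) y₁ - invFunOn f (ball 0 s) y₂‖ ≤ (a - K)⁻¹ * ‖y₁ - y₂‖ :=
  have hsurj := hf.surjOn_ball ha hL hKa hf0
  norm_sub_le_of_rightInvOn (sub_pos.2 hKa) (fun _ hx _ hy => hf.sub_mul_norm_sub_le hL hx hy)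
    hsurj.mapsTo_invFunOn hsurj.rightInvOn_invFunOn hy₁ hy₂

theorem ApproximatesLinearOn.differentiableOn_invFunOn [CompleteSpace 𝕜] [FiniteDimensional 𝕜 E]
    (hf : ApproximatesLinearOn f (L : E →L[𝕜] F) (ball 0 s) K) (ha : 0 < a)
    (hL : ∀ v, a * ‖v‖ ≤ ‖L v‖) (hKa : K < a) (hf0 : f 0 = 0)
    (hfd : DifferentiableOn 𝕜 f (ball 0 s)) :
    DifferentiableOn 𝕜 (invFunOn f (ball 0 s)) (ball 0 ((a - K) * s)) := by
  have : CompleteSpace E := FiniteDimensional.complete 𝕜 E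
  have : FiniteDimensional 𝕜 F := L.toLinearEquiv.finiteDimensional
  have hsurj := hf.surjOn_ball ha hL hKa hf0
  have hlip :
      LipschitzOnWith (a - K)⁻¹.toNNReal (invFunOn f (ball 0 s)) (ball 0 ((a - K) * s)) :=
    .of_dist_le_mul fun y₁ hy₁ y₂ hy₂ => by
      rw [dist_eq_norm, dist_eq_norm, Real.coe_toNNReal _ (inv_pos.2 (sub_pos.2 hKa)).le]
      exact hf.norm_invFunOn_sub_le ha hL hKa hf0 hy₁ hy₂
  intro y hy
  have hT : ball 0 ((a - K) * s) ∈ 𝓝 y := isOpen_ball.mem_nhds hy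
  have hs : ball 0 s ∈ 𝓝 (invFunOn f (ball 0 s) y) :=
    isOpen_ball.mem_nhds (hsurj.mapsTo_invFunOn hy)
  obtain ⟨A, hA⟩ := hfd.differentiableAt hs
  exact (differentiableAt_of_local_left_inverse_of_injective L.toLinearEquiv.finrank_eq
    (hf.injective_of_hasFDerivAt hL hKa hs hA) hA (hlip.continuousOn.continuousAt hT)
    (eventually_of_mem hT hsurj.rightInvOn_invFunOn)).differentiableWithinAt

theorem ApproximatesLinearOn.exists_graph_transform [CompleteSpace 𝕜] [FiniteDimensional 𝕜 E]
    (hf : ApproximatesLinearOn f (L : E →L[𝕜] F) (ball 0 s) K) (ha : 0 < a)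
    (hL : ∀ v, a * ‖v‖ ≤ ‖L v‖) (hKa : K < a) (hf0 : f 0 = 0) (hs : 0 < s)
    (hfd : DifferentiableOn 𝕜 f (ball 0 s)) {ψ : E → G} {M : ℝ} (hM : 0 ≤ M)
    (hψ : ∀ v₁ ∈ ball (0 : E) s, ∀ v₂ ∈ ball (0 : E) s, ‖ψ v₁ - ψ v₂‖ ≤ M * ‖v₁ - v₂‖)
    (hψ0 : ψ 0 = 0) (hψd : DifferentiableOn 𝕜 ψ (ball 0 s)) :
    ∃ ψ' : F → G, DifferentiableOn 𝕜 ψ' (ball 0 ((a - K) * s)) ∧ ψ' 0 = 0 ∧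
      (∀ y₁ ∈ ball (0 : F) ((a - K) * s), ∀ y₂ ∈ ball (0 : F) ((a - K) * s),
        ‖ψ' y₁ - ψ' y₂‖ ≤ M / (a - K) * ‖y₁ - y₂‖) ∧
      ∀ y ∈ ball (0 : F) ((a - K) * s), ∃ v ∈ ball (0 : E) s, f v = y ∧ ψ v = ψ' y := by
  have : CompleteSpace E := FiniteDimensional.complete 𝕜 E
  set u := invFunOn f (ball 0 s)
  have hsurj := hf.surjOn_ball ha hL hKa hf0
  have hc : 0 < a - K := sub_pos.2 hKa
  have h0 : (0 : F) ∈ ball 0 ((a - K) * s) := mem_ball_self (by positivity)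
  have hu0 : u 0 = 0 := by
    have := hf.sub_mul_norm_sub_le hL (hsurj.mapsTo_invFunOn h0) (mem_ball_self hs)
    rw [hsurj.rightInvOn_invFunOn h0, hf0, sub_self, norm_zero] at this
    exact sub_eq_zero.1 (norm_le_zero_iff.1 (nonpos_of_mul_nonpos_right this hc))
  refine ⟨ψ ∘ u, ?_, by simp [hu0, hψ0], fun y₁ hy₁ y₂ hy₂ => ?_,
    fun y hy => ⟨u y, hsurj.mapsTo_invFunOn hy, hsurj.rightInvOn_invFunOn hy, rfl⟩⟩
  · exact hψd.comp (hf.differentiableOn_invFunOn ha hL hKa hf0 hfd) hsurj.mapsTo_invFunOn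
  · calc ‖ψ (u y₁) - ψ (u y₂)‖ ≤ M * ‖u y₁ - u y₂‖ :=
          hψ _ (hsurj.mapsTo_invFunOn hy₁) _ (hsurj.mapsTo_invFunOn hy₂)
      _ ≤ M * ((a - K)⁻¹ * ‖y₁ - y₂‖) :=
          mul_le_mul_of_nonneg_left (hf.norm_invFunOn_sub_le ha hL hKa hf0 hy₁ hy₂) hM
      _ = M / (a - K) * ‖y₁ - y₂‖ := by ring

end LocalInverse

section Subspaces

variable {𝕜 : Type*} [NontriviallyNormedField 𝕜] {V : Type*} [NormedAddCommGroup V]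
  [NormedSpace 𝕜 V] {E F P Q : Submodule 𝕜 V} (hPQ : IsCompl P Q) {h : E → F}
  {l : V →ₗ[𝕜] V} {r g : V → V} {s : ℝ} {K : ℝ≥0}

theorem norm_add_apply_sub_add_apply_le {ε : ℝ} {v₁ v₂ : E}
    (hh : ‖h v₁ - h v₂‖ ≤ ε * ‖v₁ - v₂‖) :
    ‖((v₁ : V) + h v₁) - ((v₂ : V) + h v₂)‖ ≤ (1 + ε) * ‖v₁ - v₂‖ := by
  have : ((v₁ : V) + h v₁) - ((v₂ : V) + h v₂) =
      ((v₁ - v₂ : E) : V) + ((h v₁ - h v₂ : F) : V) := by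
    push_cast; abel
  rw [this]
  calc _ ≤ ‖v₁ - v₂‖ + ‖h v₁ - h v₂‖ := norm_add_le _ _
    _ ≤ (1 + ε) * ‖v₁ - v₂‖ := by linarith

theorem coe_projectionOnto_add_add {p q : V} (hp : p ∈ P) (hq : q ∈ Q)
    (w : V) : (P.projectionOnto Q hPQ (p + q + w) : V) = p + P.projectionOnto Q hPQ w := by
  simp [map_add, Submodule.projectionOnto_apply_of_mem_left hPQ hp,
    Submodule.projectionOnto_apply_of_mem_right hPQ hq]

theorem exists_continuousLinearEquiv_restrict [CompleteSpace 𝕜] [FiniteDimensional 𝕜 V]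
    (hdim : Module.finrank 𝕜 E = Module.finrank 𝕜 P) {a : ℝ} (ha : 0 < a)
    (hlE : ∀ v ∈ E, l v ∈ P) (hla : ∀ v ∈ E, a * ‖v‖ ≤ ‖l v‖) :
    ∃ L : E ≃L[𝕜] P, ∀ v : E, (L v : V) = l v ∧ a * ‖v‖ ≤ ‖L v‖ := by
  have hinj : Function.Injective (l.restrict hlE) := by
    refine (injective_iff_map_eq_zero _).2 fun v hv => norm_le_zero_iff.1 ?_
    have := hla v v.2
    rw [← Submodule.coe_norm, show l v = 0 from congrArg Subtype.val hv, norm_zero] at this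
    exact nonpos_of_mul_nonpos_right this ha
  refine ⟨((l.restrict hlE).linearEquivOfInjective hinj hdim).toContinuousLinearEquiv,
    fun v => ⟨rfl, hla v v.2⟩⟩

theorem approximatesLinearOn_projectionOnto_comp_graph (hglr : ∀ x, g x = l x + r x)
    (hlE : ∀ v ∈ E, l v ∈ P) (hlF : ∀ u ∈ F, l u ∈ Q) {L : E →L[𝕜] P}
    (hL : ∀ v, (L v : V) = l v)
    (hr : ∀ v₁ ∈ ball (0 : E) s, ∀ v₂ ∈ ball (0 : E) s,
      ‖(P.projectionOnto Q hPQ (r (v₁ + h v₁)) : V) - P.projectionOnto Q hPQ (r (v₂ + h v₂))‖ ≤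
        K * ‖v₁ - v₂‖) :
    ApproximatesLinearOn (fun v : E => P.projectionOnto Q hPQ (g (v + h v))) (L : E →L[𝕜] P)
      (ball 0 s) K := by
  have hΦ (v : E) : (P.projectionOnto Q hPQ (g (v + h v)) : V) =
      l v + P.projectionOnto Q hPQ (r (v + h v)) := by
    rw [hglr, map_add l, coe_projectionOnto_add_add hPQ (hlE v v.2) (hlF _ (h v).2)]
  intro v₁ hv₁ v₂ hv₂
  rw [Submodule.coe_norm, Submodule.coe_sub, Submodule.coe_sub, hΦ, hΦ, hL, Submodule.coe_sub,
    map_sub]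
  exact (congrArg norm (by abel)).trans_le (hr v₁ hv₁ v₂ hv₂)

theorem norm_projectionOnto_comp_graph_sub_le (hglr : ∀ x, g x = l x + r x)
    (hlE : ∀ v ∈ E, l v ∈ Q) (hlF : ∀ u ∈ F, l u ∈ P) {b ε : ℝ} (hb : 0 ≤ b)
    (hlb : ∀ u ∈ F, ‖l u‖ ≤ b * ‖u‖) {v₁ v₂ : E} (hh : ‖h v₁ - h v₂‖ ≤ ε * ‖v₁ - v₂‖) {C : ℝ}
    (hr : ‖(P.projectionOnto Q hPQ (r (v₁ + h v₁)) : V) -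
      P.projectionOnto Q hPQ (r (v₂ + h v₂))‖ ≤ C * ‖v₁ - v₂‖) :
    ‖P.projectionOnto Q hPQ (g (v₁ + h v₁)) - P.projectionOnto Q hPQ (g (v₂ + h v₂))‖ ≤
      (b * ε + C) * ‖v₁ - v₂‖ := by
  have hΨ (v : E) : (P.projectionOnto Q hPQ (g (v + h v)) : V) =
      l (h v) + P.projectionOnto Q hPQ (r (v + h v)) := by
    rw [hglr, map_add l, add_comm (l v),
      coe_projectionOnto_add_add hPQ (hlF _ (h v).2) (hlE v v.2)]
  rw [Submodule.coe_norm, Submodule.coe_sub, hΨ, hΨ]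
  calc _ = ‖l ((h v₁ - h v₂ : F) : V) + ((P.projectionOnto Q hPQ (r (v₁ + h v₁)) : V) -
        P.projectionOnto Q hPQ (r (v₂ + h v₂)))‖ := by
        rw [Submodule.coe_sub, map_sub]; abel_nf
    _ ≤ b * (ε * ‖v₁ - v₂‖) + C * ‖v₁ - v₂‖ :=
        (norm_add_le _ _).trans (add_le_add
          ((hlb _ (h v₁ - h v₂).2).trans (mul_le_mul_of_nonneg_left hh hb)) hr)
    _ = (b * ε + C) * ‖v₁ - v₂‖ := by ring

end Subspaces

theorem norm_comp_add_sub_le_of_graphOver {k : ℕ}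
    {E F : Submodule ℂ (EuclideanSpace ℂ (Fin k))} {h : E → F} {s ε κ : ℝ} {W : Type*}
    [SeminormedAddCommGroup W] {ρ : EuclideanSpace ℂ (Fin k) → W} (hκ : 0 ≤ κ) (hε1 : ε ≤ 1)
    (hlip : ∀ v₁ ∈ ball (0 : E) s, ∀ v₂ ∈ ball (0 : E) s, ‖h v₁ - h v₂‖ ≤ ε * ‖v₁ - v₂‖)
    (hρ : ∀ x ∈ graphOver E F h s, ∀ y ∈ graphOver E F h s, ‖ρ x - ρ y‖ ≤ κ * ‖x - y‖)
    {v₁ v₂ : E} (hv₁ : v₁ ∈ ball 0 s) (hv₂ : v₂ ∈ ball 0 s) :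
    ‖ρ (v₁ + h v₁) - ρ (v₂ + h v₂)‖ ≤ 2 * κ * ‖v₁ - v₂‖ :=
  calc _ ≤ κ * ‖((v₁ : EuclideanSpace ℂ (Fin k)) + h v₁) - (v₂ + h v₂)‖ :=
        hρ _ ⟨v₁, hv₁, rfl⟩ _ ⟨v₂, hv₂, rfl⟩
    _ ≤ κ * ((1 + ε) * ‖v₁ - v₂‖) :=
        mul_le_mul_of_nonneg_left (norm_add_apply_sub_add_apply_le (hlip v₁ hv₁ v₂ hv₂)) hκ
    _ ≤ 2 * κ * ‖v₁ - v₂‖ := by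
        nlinarith [mul_nonneg (mul_nonneg hκ (norm_nonneg (v₁ - v₂))) (sub_nonneg.2 hε1)]

theorem stmt_2_general (k : ℕ)
    (E F Et Ft : Submodule ℂ (EuclideanSpace ℂ (Fin k)))
    (hEtFt : IsCompl Et Ft)
    (hdim : Module.finrank ℂ E = Module.finrank ℂ Et)
    (a b κ ε s : ℝ) (ha : 0 < a) (hb : 0 < b) (hκ : 0 < κ) (hε : 0 < ε) (hs : 0 < s)
    (hε1 : ε ≤ 1) (hκa : 2 * κ < a)
    (h : E → F) (hhol : DifferentiableOn ℂ h (Metric.ball 0 s)) (h0 : h 0 = 0)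
    (hlip : ∀ v₁ ∈ Metric.ball (0 : E) s, ∀ v₂ ∈ Metric.ball (0 : E) s,
      ‖h v₁ - h v₂‖ ≤ ε * ‖v₁ - v₂‖)
    (U : Set (EuclideanSpace ℂ (Fin k))) (hΓU : graphOver E F h s ⊆ U)
    (g : EuclideanSpace ℂ (Fin k) → EuclideanSpace ℂ (Fin k))
    (hg : DifferentiableOn ℂ g U)
    (l : EuclideanSpace ℂ (Fin k) →ₗ[ℂ] EuclideanSpace ℂ (Fin k))
    (r : EuclideanSpace ℂ (Fin k) → EuclideanSpace ℂ (Fin k))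
    (hglr : ∀ x, g x = l x + r x)
    (hlE : ∀ v ∈ E, l v ∈ Et) (hlF : ∀ u ∈ F, l u ∈ Ft)
    (hla : ∀ v ∈ E, a * ‖v‖ ≤ ‖l v‖) (hlb : ∀ u ∈ F, ‖l u‖ ≤ b * ‖u‖)
    (hr0 : r 0 = 0)
    (hr' : ∀ x ∈ graphOver E F h s, ∀ y ∈ graphOver E F h s,
      ‖(Submodule.linearProjOfIsCompl Et Ft hEtFt (r x) : EuclideanSpace ℂ (Fin k)) -
        (Submodule.linearProjOfIsCompl Et Ft hEtFt (r y) : EuclideanSpace ℂ (Fin k))‖ ≤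
        κ * ‖x - y‖)
    (hr'' : ∀ x ∈ graphOver E F h s, ∀ y ∈ graphOver E F h s,
      ‖(Submodule.linearProjOfIsCompl Ft Et hEtFt.symm (r x) : EuclideanSpace ℂ (Fin k)) -
        (Submodule.linearProjOfIsCompl Ft Et hEtFt.symm (r y) : EuclideanSpace ℂ (Fin k))‖ ≤
        κ * ‖x - y‖) :
    ∃ ht : Et → Ft,
      DifferentiableOn ℂ ht (Metric.ball 0 ((a - 2 * κ) * s)) ∧ ht 0 = 0 ∧
      (∀ v₁ ∈ Metric.ball (0 : Et) ((a - 2 * κ) * s),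
        ∀ v₂ ∈ Metric.ball (0 : Et) ((a - 2 * κ) * s),
          ‖ht v₁ - ht v₂‖ ≤ (b * ε + 2 * κ) / (a - 2 * κ) * ‖v₁ - v₂‖) ∧
      graphOver Et Ft ht ((a - 2 * κ) * s) ⊆ g '' graphOver E F h s := by
  obtain ⟨L, hL⟩ := exists_continuousLinearEquiv_restrict hdim ha hlE hla
  have hΦ := approximatesLinearOn_projectionOnto_comp_graph hEtFt hglr hlE hlF (L := L)
    (fun v => (hL v).1) (K := ⟨2 * κ, by positivity⟩) fun v₁ hv₁ v₂ hv₂ =>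
      norm_comp_add_sub_le_of_graphOver (ρ := fun x => (Et.projectionOnto Ft hEtFt (r x) : _))
        hκ.le hε1 hlip hr' hv₁ hv₂
  have hΨ := fun v₁ (hv₁ : v₁ ∈ ball (0 : E) s) v₂ (hv₂ : v₂ ∈ ball (0 : E) s) =>
    norm_projectionOnto_comp_graph_sub_le hEtFt.symm hglr hlE hlF hb.le hlb (hlip v₁ hv₁ v₂ hv₂)
      (norm_comp_add_sub_le_of_graphOver
        (ρ := fun x => (Ft.projectionOnto Et hEtFt.symm (r x) : _)) hκ.le hε1 hlip hr'' hv₁ hv₂)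
  have hgx : DifferentiableOn ℂ (fun v : E => g (v + h v)) (ball 0 s) :=
    hg.comp (E.subtypeL.differentiable.differentiableOn.add
      (F.subtypeL.differentiable.comp_differentiableOn hhol)) fun v hv => hΓU ⟨v, hv, rfl⟩
  have hg0 : g ((0 : E) + h 0) = 0 := by simp [hglr, h0, hr0]
  obtain ⟨ht, hd, ht0, hlip', hgraph⟩ := hΦ.exists_graph_transform ha (fun v => (hL v).2) hκa
    (by simp only [hg0, map_zero]) hs
    ((Et.projectionOnto Ft hEtFt).toContinuousLinearMap.differentiable.comp_differentiableOn hgx)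
    (by positivity) hΨ (by simp only [hg0, map_zero])
    ((Ft.projectionOnto Et hEtFt.symm).toContinuousLinearMap.differentiable.comp_differentiableOn
      hgx)
  refine ⟨ht, hd, ht0, hlip', ?_⟩
  rintro _ ⟨y, hy, rfl⟩
  obtain ⟨v, hv, rfl, hψ⟩ := hgraph y hy
  refine ⟨_, ⟨v, hv, rfl⟩, ?_⟩
  dsimp only
  rw [← hψ]
  exact (Submodule.projection_add_projection_eq_self hEtFt _).symm

/-- **One-step graph transform.** Let `ℂ^k = E ⊕ F = Ẽ ⊕ F̃` with `dim E = dim Ẽ`. Let `Γ` be the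
graph over the ball of radius `s` in `E` of a holomorphic `ε`-Lipschitz map `h : E → F` with
`h(0) = 0`. Let `g = l + r` be holomorphic on an open set containing `Γ`, with `l` linear
sending `E` into `Ẽ` with expansion `≥ a` and `F` into `F̃` with contraction `≤ b`, and with
`r(0) = 0` and both projections of `r` being `κ`-Lipschitz on `Γ`. Then `g(Γ)` contains the
graph over the ball of radius `(a − 2κ)s` in `Ẽ` of a holomorphic map `h̃ : Ẽ → F̃` with
`h̃(0) = 0` and Lipschitz constant `(bε + 2κ)/(a − 2κ)`. -/
theorem stmt_2 (k : ℕ) (hk : 1 ≤ k)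
    (E F Et Ft : Submodule ℂ (EuclideanSpace ℂ (Fin k)))
    (hEF : IsCompl E F) (hEtFt : IsCompl Et Ft)
    (hdim : Module.finrank ℂ E = Module.finrank ℂ Et)
    (a b κ ε s : ℝ) (ha : 0 < a) (hb : 0 < b) (hκ : 0 < κ) (hε : 0 < ε) (hs : 0 < s)
    (hba : b ≤ a) (hε1 : ε ≤ 1) (hκa : 2 * κ < a)
    (h : E → F) (hhol : DifferentiableOn ℂ h (Metric.ball 0 s)) (h0 : h 0 = 0)
    (hlip : ∀ v₁ ∈ Metric.ball (0 : E) s, ∀ v₂ ∈ Metric.ball (0 : E) s,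
      ‖h v₁ - h v₂‖ ≤ ε * ‖v₁ - v₂‖)
    (U : Set (EuclideanSpace ℂ (Fin k))) (hU : IsOpen U) (hΓU : graphOver E F h s ⊆ U)
    (g : EuclideanSpace ℂ (Fin k) → EuclideanSpace ℂ (Fin k))
    (hg : DifferentiableOn ℂ g U)
    (l : EuclideanSpace ℂ (Fin k) →ₗ[ℂ] EuclideanSpace ℂ (Fin k))
    (r : EuclideanSpace ℂ (Fin k) → EuclideanSpace ℂ (Fin k))
    (hglr : ∀ x, g x = l x + r x)
    (hlE : ∀ v ∈ E, l v ∈ Et) (hlF : ∀ u ∈ F, l u ∈ Ft)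
    (hla : ∀ v ∈ E, a * ‖v‖ ≤ ‖l v‖) (hlb : ∀ u ∈ F, ‖l u‖ ≤ b * ‖u‖)
    (hr0 : r 0 = 0)
    (hr' : ∀ x ∈ graphOver E F h s, ∀ y ∈ graphOver E F h s,
      ‖(Submodule.linearProjOfIsCompl Et Ft hEtFt (r x) : EuclideanSpace ℂ (Fin k)) -
        (Submodule.linearProjOfIsCompl Et Ft hEtFt (r y) : EuclideanSpace ℂ (Fin k))‖ ≤
        κ * ‖x - y‖)
    (hr'' : ∀ x ∈ graphOver E F h s, ∀ y ∈ graphOver E F h s,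
      ‖(Submodule.linearProjOfIsCompl Ft Et hEtFt.symm (r x) : EuclideanSpace ℂ (Fin k)) -
        (Submodule.linearProjOfIsCompl Ft Et hEtFt.symm (r y) : EuclideanSpace ℂ (Fin k))‖ ≤
        κ * ‖x - y‖) :
    ∃ ht : Et → Ft,
      DifferentiableOn ℂ ht (Metric.ball 0 ((a - 2 * κ) * s)) ∧ ht 0 = 0 ∧
      (∀ v₁ ∈ Metric.ball (0 : Et) ((a - 2 * κ) * s),
        ∀ v₂ ∈ Metric.ball (0 : Et) ((a - 2 * κ) * s),
          ‖ht v₁ - ht v₂‖ ≤ (b * ε + 2 * κ) / (a - 2 * κ) * ‖v₁ - v₂‖) ∧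
      graphOver Et Ft ht ((a - 2 * κ) * s) ⊆ g '' graphOver E F h s :=
  stmt_2_general k E F Et Ft hEtFt hdim a b κ ε s ha hb hκ hε hs hε1 hκa h hhol h0 hlip U hΓU g hg l
    r hglr hlE hlF hla hlb hr0 hr' hr''
end

section
/- Let E and F be complementary complex-linear subspaces of ℂ^k (that is, ℂ^k = E ⊕ F), let F' := E^⊥ be the orthogonal complement of E with respect to the standard Hermitian inner product on ℂ^k, and let P_E and P_{F'} denote the orthogonal projections onto E and F'. Let 0 < ε < 1 and s > 0, and let h : {v ∈ E : ‖v‖ < s} → F be holomorphic with h(0) = 0 and ‖h(v₁) − h(v₂)‖ ≤ ε‖v₁ − v₂‖ for all v₁, v₂. Then there exists a holomorphic map h' : {v ∈ E : ‖v‖ < (1 − ε)s} → F' with h'(0) = 0 and ‖h'(v₁) − h'(v₂)‖ ≤ (ε/(1 − ε))‖v₁ − v₂‖ for all v₁, v₂, such that {v + h'(v) : v ∈ E, ‖v‖ < (1 − ε)s} ⊆ {v + h(v) : v ∈ E, ‖v‖ < s}. -/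
/-!
Write `P` and `Q` for the orthogonal projections onto `E` and `Eᗮ`. The map `Φ v = v + P (h v)`
of `E` is the identity perturbed by an `ε`-Lipschitz map, so it is injective, its image contains
the ball of radius `(1 - ε) s`, and its inverse `g` there is `(1 - ε)⁻¹`-Lipschitz and, by the
inverse function theorem, holomorphic. Since `v + h v = Φ v + Q (h v)`, the graph of
`h' = Q ∘ h ∘ g` is contained in the graph of `h`.
-/

open Set Metric Function
open scoped NNReal Topology

namespace LipschitzOnWith

section PerturbationOfIdentity

variable {X : Type*} [NormedAddCommGroup X] {ψ g : X → X} {K : ℝ≥0} {s : ℝ} {t u : Set X}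

theorem one_sub_mul_norm_sub_le (hψ : LipschitzOnWith K ψ u) {x y : X} (hx : x ∈ u)
    (hy : y ∈ u) : (1 - K) * ‖x - y‖ ≤ ‖(x + ψ x) - (y + ψ y)‖ := by
  have hxy : x - y = ((x + ψ x) - (y + ψ y)) - (ψ x - ψ y) := by abel
  have hψxy := hψ.norm_sub_le hx hy
  have htri := hxy ▸ _root_.norm_sub_le ((x + ψ x) - (y + ψ y)) (ψ x - ψ y)
  linarith

theorem injOn_id_add (hψ : LipschitzOnWith K ψ u) (hK : K < 1) :
    InjOn (fun v ↦ v + ψ v) u := by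
  intro x hx y hy hxy
  have hK' : (0 : ℝ) < 1 - K := sub_pos.2 (by exact_mod_cast hK)
  have hle := hψ.one_sub_mul_norm_sub_le hx hy
  rw [show x + ψ x = y + ψ y from hxy, sub_self, norm_zero] at hle
  exact sub_eq_zero.1 (norm_le_zero_iff.1 (nonpos_of_mul_nonpos_right hle hK'))

theorem lipschitzOnWith_of_rightInvOn_id_add (hψ : LipschitzOnWith K ψ u) (hK : K < 1)
    (hgt : MapsTo g t u) (hg : RightInvOn g (fun v ↦ v + ψ v) t) :
    LipschitzOnWith (1 - K)⁻¹ g t := by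
  refine lipschitzOnWith_iff_norm_sub_le.2 fun x hx y hy ↦ ?_
  have hK' : (0 : ℝ) < 1 - K := sub_pos.2 (by exact_mod_cast hK)
  have hle := hψ.one_sub_mul_norm_sub_le (hgt hx) (hgt hy)
  rw [show g x + ψ (g x) = x from hg hx, show g y + ψ (g y) = y from hg hy] at hle
  rw [NNReal.coe_inv, NNReal.coe_sub hK.le, NNReal.coe_one, inv_mul_eq_div, le_div_iff₀' hK']
  exact hle

/-- The solution of `v + ψ v = w` is the fixed point of the contraction `v ↦ w - ψ v` of the
closed ball of radius `‖w‖ / (1 - K)`. -/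
theorem surjOn_id_add_ball [CompleteSpace X] (hψ : LipschitzOnWith K ψ (ball 0 s))
    (hψ0 : ψ 0 = 0) (hK : K < 1) :
    SurjOn (fun v ↦ v + ψ v) (ball 0 s) (ball 0 ((1 - K) * s)) := by
  intro w hw
  rw [mem_ball_zero_iff] at hw
  have hK' : (0 : ℝ) < 1 - K := sub_pos.2 (by exact_mod_cast hK)
  set r := ‖w‖ / (1 - K)
  have hr : 0 ≤ r := by positivity
  have hrs : r < s := (div_lt_iff₀' hK').2 hw
  have hsub : closedBall (0 : X) r ⊆ ball 0 s := closedBall_subset_ball hrs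
  have hψr : LipschitzOnWith K (fun v ↦ w - ψ v) (closedBall 0 r) := by
    refine lipschitzOnWith_iff_norm_sub_le.2 fun x hx y hy ↦ ?_
    rw [sub_sub_sub_cancel_left, norm_sub_rev]
    exact hψ.norm_sub_le (hsub hx) (hsub hy)
  have hmaps : MapsTo (fun v ↦ w - ψ v) (closedBall 0 r) (closedBall 0 r) := by
    intro v hv
    have hψv : ‖ψ v‖ ≤ K * r := by
      have := hψ.norm_sub_le (hsub hv) (mem_ball_self (hr.trans_lt hrs))
      rw [hψ0, sub_zero, sub_zero] at this
      exact this.trans (by gcongr; exact mem_closedBall_zero_iff.1 hv)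
    rw [mem_closedBall_zero_iff]
    calc ‖w - ψ v‖ ≤ ‖w‖ + K * r := (_root_.norm_sub_le _ _).trans (by gcongr)
      _ = r := by simp only [r]; field_simp; ring
  obtain ⟨v, hv, hfix, -⟩ := ContractingWith.exists_fixedPoint' isClosed_closedBall.isComplete
    hmaps ⟨hK, hψr.mapsToRestrict hmaps⟩ (mem_closedBall_self hr) (edist_ne_top _ _)
  exact ⟨v, hsub hv, by simpa [eq_sub_iff_add_eq] using hfix.symm⟩

variable {𝕜 : Type*} [NontriviallyNormedField 𝕜] [NormedSpace 𝕜 X] [CompleteSpace X]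

/-- The derivative `1 + Dψ` is invertible because `‖Dψ‖ ≤ K < 1`. -/
theorem differentiableOn_of_rightInvOn_id_add (hψ : LipschitzOnWith K ψ u) (hK : K < 1)
    (hu : IsOpen u) (hψd : DifferentiableOn 𝕜 ψ u) (ht : IsOpen t) (hgt : MapsTo g t u)
    (hg : RightInvOn g (fun v ↦ v + ψ v) t) : DifferentiableOn 𝕜 g t := by
  intro w hw
  have hu_nhds : u ∈ 𝓝 (g w) := hu.mem_nhds (hgt hw)
  have hψ' := ((hψd _ (hgt hw)).differentiableAt hu_nhds).hasFDerivAt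
  have hnorm : ‖-fderiv 𝕜 ψ (g w)‖ < 1 := by
    rw [norm_neg]
    exact (hψ'.le_of_lipschitzOn hu_nhds hψ).trans_lt (by exact_mod_cast hK)
  let A : X ≃L[𝕜] X := .ofUnit (Units.oneSub _ hnorm)
  have hA : HasFDerivAt (fun v ↦ v + ψ v) (A : X →L[𝕜] X) (g w) := by
    have hA_eq : (A : X →L[𝕜] X) = ContinuousLinearMap.id 𝕜 X + fderiv 𝕜 ψ (g w) := by
      show ((Units.oneSub _ hnorm : (X →L[𝕜] X)ˣ) : X →L[𝕜] X) = _
      rw [Units.val_oneSub, sub_neg_eq_add, ContinuousLinearMap.one_def]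
    rw [hA_eq]
    exact (hasFDerivAt_id _).add hψ'
  have hgc : ContinuousAt g w :=
    (hψ.lipschitzOnWith_of_rightInvOn_id_add hK hgt hg).continuousOn.continuousAt
      (ht.mem_nhds hw)
  exact (hA.of_local_left_inverse hgc (Filter.eventually_of_mem (ht.mem_nhds hw) hg)
    ).differentiableAt.differentiableWithinAt

theorem exists_rightInvOn_id_add_ball (hs : 0 < s) (hψ : LipschitzOnWith K ψ (ball 0 s))
    (hψd : DifferentiableOn 𝕜 ψ (ball 0 s)) (hψ0 : ψ 0 = 0) (hK : K < 1) :
    ∃ g : X → X, MapsTo g (ball 0 ((1 - K) * s)) (ball 0 s) ∧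
      RightInvOn g (fun v ↦ v + ψ v) (ball 0 ((1 - K) * s)) ∧ g 0 = 0 ∧
      LipschitzOnWith (1 - K)⁻¹ g (ball 0 ((1 - K) * s)) ∧
      DifferentiableOn 𝕜 g (ball 0 ((1 - K) * s)) := by
  have hsurj := hψ.surjOn_id_add_ball hψ0 hK
  refine ⟨invFunOn (fun v ↦ v + ψ v) (ball 0 s), hsurj.mapsTo_invFunOn,
    hsurj.rightInvOn_invFunOn, ?_,
    hψ.lipschitzOnWith_of_rightInvOn_id_add hK hsurj.mapsTo_invFunOn hsurj.rightInvOn_invFunOn,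
    hψ.differentiableOn_of_rightInvOn_id_add hK isOpen_ball hψd isOpen_ball
      hsurj.mapsTo_invFunOn hsurj.rightInvOn_invFunOn⟩
  simpa [hψ0] using (hψ.injOn_id_add hK).leftInvOn_invFunOn (mem_ball_self hs)

end PerturbationOfIdentity

theorem orthogonalProjectionOnto_comp {𝕜 V α : Type*} [RCLike 𝕜] [NormedAddCommGroup V]
    [InnerProductSpace 𝕜 V] [PseudoEMetricSpace α] (S : Submodule 𝕜 V)
    [S.HasOrthogonalProjection] {f : α → V} {K : ℝ≥0} {s : Set α}
    (hf : LipschitzOnWith K f s) :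
    LipschitzOnWith K (fun x ↦ S.orthogonalProjectionOnto (f x)) s := by
  have hS : LipschitzWith 1 S.orthogonalProjectionOnto :=
    S.orthogonalProjectionOnto.lipschitz.weaken S.orthogonalProjectionOnto_norm_le
  simpa [Function.comp_def] using hS.comp_lipschitzOnWith hf

end LipschitzOnWith

theorem stmt_4_general (k : ℕ)
    (E F : Submodule ℂ (EuclideanSpace ℂ (Fin k)))
    (ε s : ℝ) (hε0 : 0 < ε) (hε1 : ε < 1) (hs : 0 < s)
    (h : E → F) (hhol : DifferentiableOn ℂ h (Metric.ball 0 s)) (h0 : h 0 = 0)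
    (hlip : ∀ v₁ ∈ Metric.ball (0 : E) s, ∀ v₂ ∈ Metric.ball (0 : E) s,
      ‖h v₁ - h v₂‖ ≤ ε * ‖v₁ - v₂‖) :
    ∃ h' : E → Eᗮ,
      DifferentiableOn ℂ h' (Metric.ball 0 ((1 - ε) * s)) ∧ h' 0 = 0 ∧
      (∀ v₁ ∈ Metric.ball (0 : E) ((1 - ε) * s), ∀ v₂ ∈ Metric.ball (0 : E) ((1 - ε) * s),
        ‖h' v₁ - h' v₂‖ ≤ ε / (1 - ε) * ‖v₁ - v₂‖) ∧
      graphOver E Eᗮ h' ((1 - ε) * s) ⊆ graphOver E F h s := by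
  set K : ℝ≥0 := ⟨ε, hε0.le⟩
  have hK : K < 1 := hε1
  have hlipK : LipschitzOnWith K (fun v ↦ (h v : EuclideanSpace ℂ (Fin k))) (ball 0 s) :=
    lipschitzOnWith_iff_norm_sub_le.2 hlip
  have hhol' : DifferentiableOn ℂ (fun v ↦ (h v : EuclideanSpace ℂ (Fin k))) (ball 0 s) :=
    F.subtypeL.differentiable.comp_differentiableOn hhol
  obtain ⟨g, hgmaps, hginv, hg0, hglip, hgdiff⟩ :=
    (hlipK.orthogonalProjectionOnto_comp E).exists_rightInvOn_id_add_ball hs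
      (E.orthogonalProjectionOnto.differentiable.comp_differentiableOn hhol') (by simp [h0]) hK
  refine ⟨fun w ↦ Eᗮ.orthogonalProjectionOnto (h (g w)), ?_, by simp [hg0, h0], ?_, ?_⟩
  · exact Eᗮ.orthogonalProjectionOnto.differentiable.comp_differentiableOn
      (hhol'.comp hgdiff hgmaps)
  · intro v₁ hv₁ v₂ hv₂
    have := ((hlipK.orthogonalProjectionOnto_comp Eᗮ).comp hglip hgmaps).norm_sub_le hv₁ hv₂
    rwa [NNReal.coe_mul, NNReal.coe_inv, NNReal.coe_sub hK.le, ← div_eq_mul_inv] at this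
  · rintro _ ⟨w, hw, rfl⟩
    refine ⟨g w, hgmaps hw, ?_⟩
    have hsplit :=
      E.starProjection_add_starProjection_orthogonal (h (g w) : EuclideanSpace ℂ (Fin k))
    have hgw : (g w : EuclideanSpace ℂ (Fin k)) + E.starProjection (h (g w)) = w :=
      congrArg Subtype.val (hginv hw)
    calc (g w : EuclideanSpace ℂ (Fin k)) + h (g w)
        = (g w + E.starProjection (h (g w))) + Eᗮ.starProjection (h (g w)) := by
          rw [add_assoc, hsplit]
      _ = w + Eᗮ.orthogonalProjectionOnto (h (g w)) := by rw [hgw]; rfl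

/-- **Straightening a Lipschitz holomorphic graph onto the orthogonal complement.** A graph over
`E` with values in an arbitrary complement `F`, with Lipschitz constant `ε < 1`, contains a graph
over `E` with values in the orthogonal complement `F' = Eᗮ`, of radius `(1−ε)s` and Lipschitz
constant `ε/(1−ε)`. -/
theorem stmt_4 (k : ℕ) (hk : 1 ≤ k)
    (E F : Submodule ℂ (EuclideanSpace ℂ (Fin k))) (hEF : IsCompl E F)
    (ε s : ℝ) (hε0 : 0 < ε) (hε1 : ε < 1) (hs : 0 < s)
    (h : E → F) (hhol : DifferentiableOn ℂ h (Metric.ball 0 s)) (h0 : h 0 = 0)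
    (hlip : ∀ v₁ ∈ Metric.ball (0 : E) s, ∀ v₂ ∈ Metric.ball (0 : E) s,
      ‖h v₁ - h v₂‖ ≤ ε * ‖v₁ - v₂‖) :
    ∃ h' : E → Eᗮ,
      DifferentiableOn ℂ h' (Metric.ball 0 ((1 - ε) * s)) ∧ h' 0 = 0 ∧
      (∀ v₁ ∈ Metric.ball (0 : E) ((1 - ε) * s), ∀ v₂ ∈ Metric.ball (0 : E) ((1 - ε) * s),
        ‖h' v₁ - h' v₂‖ ≤ ε / (1 - ε) * ‖v₁ - v₂‖) ∧
      graphOver E Eᗮ h' ((1 - ε) * s) ⊆ graphOver E F h s :=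
  stmt_4_general k E F ε s hε0 hε1 hs h hhol h0 hlip
end

section
/- Let (X, d) be a metric space, T : X → X a continuous map, μ a Borel probability measure on X, and h > 0. Assume that for μ-almost every x ∈ X one has sup_{ε>0} liminf_{n→∞} −(1/n) log μ(B_n(x, ε)) ≥ h. Then for every θ > 0 there exist ε > 0, C > 0 and a Borel set Σ₀ ⊆ X with μ(Σ₀) > 3/4 such that μ(B_n(x, 6ε)) ≤ C e^{−n(h−θ)} for every x ∈ Σ₀ and every integer n ≥ 0. -/
open MeasureTheory Filter

/-- The Bowen ball `B_n(x, ε) = {y | dist (T^j x) (T^j y) ≤ ε for all 0 ≤ j ≤ n}`. -/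
def bowenBall {X : Type*} [MetricSpace X] (T : X → X) (n : ℕ) (x : X) (ε : ℝ) : Set X :=
  {y | ∀ j ≤ n, dist (T^[j] x) (T^[j] y) ≤ ε}

section aux
open Set Metric
variable {X : Type*} [MetricSpace X] [MeasurableSpace X] [BorelSpace X] {T : X → X}

omit [MeasurableSpace X] [BorelSpace X] in
lemma bowenBall_mono (T : X → X) (n : ℕ) (x : X) {ε ε' : ℝ} (h : ε ≤ ε') :
    bowenBall T n x ε ⊆ bowenBall T n x ε' :=
  fun _ hy j hj => (hy j hj).trans h

omit [MeasurableSpace X] [BorelSpace X] in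
lemma isClosed_bowenBall (hT : Continuous T) (n : ℕ) (x : X) (ε : ℝ) :
    IsClosed (bowenBall T n x ε) := by
  have : bowenBall T n x ε = ⋂ j ∈ Finset.range (n+1),
      (fun y => dist (T^[j] x) (T^[j] y)) ⁻¹' Iic ε := by
    ext y
    simp [bowenBall, Nat.lt_succ_iff]
  rw [this]
  exact isClosed_biInter fun j _ =>
    IsClosed.preimage ((continuous_const.dist (hT.iterate j))) isClosed_Iic

omit [MeasurableSpace X] [BorelSpace X] in
lemma bowenBall_eq_iInter (T : X → X) (n : ℕ) (x : X) (ε : ℝ) :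
    bowenBall T n x ε = ⋂ m : ℕ, bowenBall T n x (ε + 1/(m+1)) := by
  ext y
  simp only [mem_iInter]
  constructor
  · intro hy m
    have h0 : (0:ℝ) < 1/(m+1) := by positivity
    exact bowenBall_mono T n x (by linarith) hy
  · intro hy j hj
    refine le_of_forall_pos_le_add fun δ hδ => ?_
    obtain ⟨m, hm⟩ := exists_nat_one_div_lt hδ
    exact (hy m j hj).trans (by linarith)

lemma isOpen_small (hT : Continuous T) (μ : Measure X) [IsFiniteMeasure μ] (n : ℕ) (ε : ℝ)
    (c : ENNReal) : IsOpen {x : X | μ (bowenBall T n x ε) < c} := by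
  rw [isOpen_iff_mem_nhds]
  intro x hx
  have hanti : Antitone fun m : ℕ => bowenBall T n x (ε + 1/(m+1)) := by
    intro a b hab
    refine bowenBall_mono T n x ?_
    have : (1:ℝ)/(b+1) ≤ 1/(a+1) := by
      apply one_div_le_one_div_of_le (by positivity)
      exact_mod_cast by omega
    linarith
  have heq := (hanti.measure_iInter (μ := μ)
    (fun m => ((isClosed_bowenBall hT n x _).measurableSet).nullMeasurableSet)
    ⟨0, measure_ne_top μ _⟩)
  rw [← bowenBall_eq_iInter] at heq
  rw [Set.mem_setOf_eq, heq, iInf_lt_iff] at hx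
  obtain ⟨m, hm⟩ := hx
  set δ : ℝ := 1/(m+1) with hδdef
  have hδ : (0:ℝ) < δ := by positivity
  have hopen : IsOpen (⋂ j ∈ Finset.range (n+1), (T^[j]) ⁻¹' Metric.ball (T^[j] x) δ) :=
    isOpen_biInter_finset fun j _ => (isOpen_ball).preimage (hT.iterate j)
  refine mem_nhds_iff.2 ⟨_, ?_, hopen, ?_⟩
  · intro x' hx'
    simp only [mem_iInter, Finset.mem_range, Nat.lt_succ_iff, mem_preimage, mem_ball] at hx'
    have hsub : bowenBall T n x' ε ⊆ bowenBall T n x (ε + δ) := by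
      intro y hy j hj
      calc dist (T^[j] x) (T^[j] y) ≤ dist (T^[j] x) (T^[j] x') + dist (T^[j] x') (T^[j] y) :=
        dist_triangle _ _ _
      _ ≤ δ + ε := add_le_add (le_of_lt (by rw [dist_comm]; exact hx' j hj)) (hy j hj)
      _ = ε + δ := by ring
    exact lt_of_le_of_lt (measure_mono hsub) hm
  · simp only [mem_iInter, Finset.mem_range, mem_preimage, mem_ball]
    intro j _
    simp [hδ]

/-- Core EReal computation. -/
lemma core_lt {z : ENNReal} (hz : z ≤ 1) {n : ℕ} (hn : 1 ≤ n) {a : ℝ}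
    (ha : (a : EReal) < ((-(1 / (n : ℝ)) : ℝ) : EReal) * ENNReal.log z) :
    z < ENNReal.ofReal (Real.exp (-(n : ℝ) * a)) := by
  rcases eq_or_ne z 0 with rfl | hz0
  · exact ENNReal.ofReal_pos.2 (Real.exp_pos _)
  have hztop : z ≠ ⊤ := (lt_of_le_of_lt hz (by norm_num)).ne
  have hzt : 0 < z.toReal := ENNReal.toReal_pos hz0 hztop
  rw [ENNReal.log_pos_real hz0 hztop, ← EReal.coe_mul, EReal.coe_lt_coe_iff] at ha
  have hn' : (0:ℝ) < n := by exact_mod_cast hn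
  have h1 : (1/(n:ℝ)) * n = 1 := by field_simp
  have h2 : (n:ℝ) * (-(1/(n:ℝ)) * Real.log z.toReal) = - Real.log z.toReal := by
    field_simp
  have hlog : Real.log z.toReal < -(n:ℝ) * a := by
    have h3 := mul_lt_mul_of_pos_left ha hn'
    rw [h2] at h3
    linarith
  have hzlt : z.toReal < Real.exp (-(n:ℝ) * a) := by
    calc z.toReal = Real.exp (Real.log z.toReal) := (Real.exp_log hzt).symm
    _ < _ := Real.exp_lt_exp.2 hlog
  calc z = ENNReal.ofReal z.toReal := (ENNReal.ofReal_toReal hztop).symm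
  _ < _ := (ENNReal.ofReal_lt_ofReal_iff (Real.exp_pos _)).2 hzlt

end aux

open Set Metric

/-- **Uniform Brin–Katok bound on a set of large measure.** If for `μ`-a.e. `x` the lower local
entropy `sup_{ε>0} liminf_n −(1/n) log μ(B_n(x,ε))` is at least `h`, then for every `θ > 0` there
are `ε > 0`, `C > 0` and a Borel set `S₀` with `μ(S₀) > 3/4` such that
`μ(B_n(x, 6ε)) ≤ C e^{−n(h−θ)}` for all `x ∈ S₀` and all `n ≥ 0`. -/
theorem stmt_6 {X : Type*} [MetricSpace X] [MeasurableSpace X] [BorelSpace X]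
    (T : X → X) (hT : Continuous T)
    (μ : Measure X) [IsProbabilityMeasure μ] (h : ℝ) (hh : 0 < h)
    (hBK : ∀ᵐ x ∂μ, (h : EReal) ≤ ⨆ (ε : ℝ) (_ : 0 < ε),
      atTop.liminf fun n : ℕ =>
        ((-(1 / (n : ℝ)) : ℝ) : EReal) * ENNReal.log (μ (bowenBall T n x ε))) :
    ∀ θ > 0, ∃ ε > 0, ∃ C > 0, ∃ S₀ : Set X, MeasurableSet S₀ ∧ 3/4 < μ S₀ ∧
      ∀ x ∈ S₀, ∀ n : ℕ,
        μ (bowenBall T n x (6 * ε)) ≤ ENNReal.ofReal (C * Real.exp (-(n : ℝ) * (h - θ))) := by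
  intro θ hθ
  set c : ℕ → ENNReal := fun n => ENNReal.ofReal (Real.exp (-(n:ℝ) * (h - θ))) with hc
  set G : ℕ → Set X := fun m =>
    ⋂ n, ⋂ (_ : m + 1 ≤ n), {x : X | μ (bowenBall T n x (1/((m:ℝ)+1))) < c n} with hG
  have hGmeas : ∀ m, MeasurableSet (G m) := fun m =>
    MeasurableSet.iInter fun n => MeasurableSet.iInter fun _ =>
      (isOpen_small hT μ n _ (c n)).measurableSet
  have hGmono : Monotone G := by
    intro a b hab x hx
    simp only [hG, mem_iInter, mem_setOf_eq] at hx ⊢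
    intro n hn
    have h1 : (1:ℝ)/((b:ℝ)+1) ≤ 1/((a:ℝ)+1) := by
      apply one_div_le_one_div_of_le (by positivity)
      exact_mod_cast by omega
    exact lt_of_le_of_lt (measure_mono (bowenBall_mono T n x h1)) (hx n (by omega))
  -- a.e. membership in the union
  have hae : ∀ᵐ x ∂μ, x ∈ ⋃ m, G m := by
    filter_upwards [hBK] with x hx
    have h1 : ((h - θ/2 : ℝ) : EReal) < ⨆ (ε : ℝ) (_ : 0 < ε),
        atTop.liminf fun n : ℕ =>
          ((-(1 / (n : ℝ)) : ℝ) : EReal) * ENNReal.log (μ (bowenBall T n x ε)) :=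
      lt_of_lt_of_le (EReal.coe_lt_coe_iff.2 (by linarith)) hx
    rw [lt_iSup_iff] at h1
    obtain ⟨ε, h1⟩ := h1
    rw [lt_iSup_iff] at h1
    obtain ⟨hε, h1⟩ := h1
    have h2 := eventually_lt_of_lt_liminf h1
    rw [eventually_atTop] at h2
    obtain ⟨N, hN⟩ := h2
    set m := max N ⌈1/ε⌉₊ with hm
    have hsmall : (1:ℝ)/((m:ℝ)+1) ≤ ε := by
      have h3 : 1/ε ≤ (m:ℝ)+1 := by
        calc (1:ℝ)/ε ≤ (⌈1/ε⌉₊ : ℝ) := Nat.le_ceil _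
        _ ≤ (m:ℝ)+1 := by
          have : (⌈1/ε⌉₊ : ℝ) ≤ (m:ℝ) := by exact_mod_cast le_max_right N _
          linarith
      rw [div_le_iff₀ (by positivity)]
      have h4 := (div_le_iff₀ hε).1 h3
      nlinarith
    refine mem_iUnion.2 ⟨m, ?_⟩
    simp only [hG, mem_iInter, mem_setOf_eq]
    intro n hn
    have hn1 : 1 ≤ n := by omega
    have hnN : N ≤ n := by omega
    have hlt := core_lt (prob_le_one (μ := μ)) hn1 (hN n hnN)
    refine lt_of_le_of_lt (measure_mono (bowenBall_mono T n x hsmall)) (lt_of_lt_of_le hlt ?_)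
    apply ENNReal.ofReal_le_ofReal
    apply Real.exp_le_exp.2
    have : (0:ℝ) ≤ n := Nat.cast_nonneg n
    nlinarith
  -- extract one good index
  have hUmeas : MeasurableSet (⋃ m, G m) := MeasurableSet.iUnion hGmeas
  have hU1 : μ (⋃ m, G m) = 1 := by
    rw [← prob_compl_eq_zero_iff hUmeas]
    rw [ae_iff] at hae
    exact hae
  have hsup : (3/4 : ENNReal) < ⨆ m, μ (G m) := by
    rw [← hGmono.measure_iUnion, hU1]
    rw [ENNReal.div_lt_iff (by norm_num) (by norm_num)]
    norm_num
  rw [lt_iSup_iff] at hsup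
  obtain ⟨m, hm34⟩ := hsup
  set C : ℝ := Real.exp (((m:ℝ)+1) * |h - θ|) with hC
  have hC1 : 1 ≤ C := Real.one_le_exp (by positivity)
  refine ⟨1/(6*((m:ℝ)+1)), by positivity, C, lt_of_lt_of_le one_pos hC1, G m,
    hGmeas m, hm34, ?_⟩
  intro x hx n
  have h6 : 6 * (1/(6*((m:ℝ)+1))) = 1/((m:ℝ)+1) := by
    field_simp
  rw [h6]
  rcases le_or_gt (m+1) n with hn | hn
  · -- large n : use membership in G m
    simp only [hG, mem_iInter, mem_setOf_eq] at hx
    refine le_trans (hx n hn).le (ENNReal.ofReal_le_ofReal ?_)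
    exact le_mul_of_one_le_left (Real.exp_pos _).le hC1
  · -- small n : use C
    have hcast : (n:ℝ) ≤ (m:ℝ)+1 := by exact_mod_cast by omega
    have hexp : 1 ≤ C * Real.exp (-(n:ℝ) * (h - θ)) := by
      rw [hC, ← Real.exp_add]
      apply Real.one_le_exp
      have h1 : (n:ℝ) * (h - θ) ≤ (n:ℝ) * |h - θ| :=
        mul_le_mul_of_nonneg_left (le_abs_self _) (Nat.cast_nonneg n)
      have h2 : (n:ℝ) * |h - θ| ≤ ((m:ℝ)+1) * |h - θ| :=
        mul_le_mul_of_nonneg_right hcast (abs_nonneg _)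
      linarith
    calc μ (bowenBall T n x (1/((m:ℝ)+1))) ≤ 1 := prob_le_one
    _ ≤ ENNReal.ofReal (C * Real.exp (-(n:ℝ) * (h - θ))) := by
      rw [← ENNReal.ofReal_one]
      exact ENNReal.ofReal_le_ofReal hexp
end

section
/- Let D ⊆ ℂ^k be a bounded open set and K > 0. Let φ and ψ be real-valued C² functions on a neighborhood of the closure of D such that, for all z ∈ D and v ∈ ℂ^k: |φ(z)| ≤ K, |ψ(z)| ≤ K, the operator norms of the real derivatives satisfy ‖Dφ(z)‖ ≤ K and ‖Dψ(z)‖ ≤ K, and the Levi forms satisfy L_φ(z; v) ≥ ‖v‖² and L_ψ(z; v) ≥ ‖v‖². Then for every A ≥ K + K², the two functions on D × D ⊆ ℂ^{2k} given by (z, z') ↦ (φ(z) + A)(ψ(z') + A) and (z, z') ↦ (−φ(z) + A)(ψ(z') − A) have nonnegative Levi form at every point of D × D; that is, they are plurisubharmonic on D × D. -/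
/-!
Along a complex line through `(z, z')`, the Levi form of `(z, z') ↦ f z * g z'` is
`f L_g + g L_f + 2 (Df(v) Dg(v') + Df(I v) Dg(I v'))`. For both products in the theorem the two
factors have the same sign and absolute value at least `K²` (this is where `A ≥ K + K²` enters),
so the first two terms contribute at least `K² (‖v‖² + ‖v'‖²) ≥ 2 K² ‖v‖ ‖v'‖`, while by
Cauchy–Schwarz and `‖Dφ‖, ‖Dψ‖ ≤ K` the cross term is at most `K² ‖v‖ ‖v'‖` in absolute value.
-/

/-- The Levi form of a real-valued `C²` function `ρ` at `z` in the direction `v`: the Laplacian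
at `w = 0` of the function `ℂ ∋ w ↦ ρ (z + w • v)`. -/
noncomputable def leviForm {E : Type*} [NormedAddCommGroup E] [NormedSpace ℂ E]
    (ρ : E → ℝ) (z v : E) : ℝ :=
  iteratedFDeriv ℝ 2 (fun w : ℂ => ρ (z + w • v)) 0 ![1, 1] +
  iteratedFDeriv ℝ 2 (fun w : ℂ => ρ (z + w • v)) 0 ![Complex.I, Complex.I]

open Complex Filter Topology

theorem iteratedFDeriv_two_mul_apply_diag {V : Type*} [NormedAddCommGroup V] [NormedSpace ℝ V]
    {f g : V → ℝ} {x : V} (hf : ContDiffAt ℝ 2 f x) (hg : ContDiffAt ℝ 2 g x) (u : V) :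
    iteratedFDeriv ℝ 2 (fun y => f y * g y) x ![u, u] =
      f x * iteratedFDeriv ℝ 2 g x ![u, u] + g x * iteratedFDeriv ℝ 2 f x ![u, u] +
        2 * (fderiv ℝ f x u * fderiv ℝ g x u) := by
  have hf' : ∀ᶠ y in 𝓝 x, DifferentiableAt ℝ f y :=
    (hf.eventually (by simp)).mono fun y hy => hy.differentiableAt two_ne_zero
  have hg' : ∀ᶠ y in 𝓝 x, DifferentiableAt ℝ g y :=
    (hg.eventually (by simp)).mono fun y hy => hy.differentiableAt two_ne_zero
  have hDf : DifferentiableAt ℝ (fderiv ℝ f) x :=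
    (hf.fderiv_right (m := 1) le_rfl).differentiableAt one_ne_zero
  have hDg : DifferentiableAt ℝ (fderiv ℝ g) x :=
    (hg.fderiv_right (m := 1) le_rfl).differentiableAt one_ne_zero
  have hDfg : fderiv ℝ (fun y => f y * g y) =ᶠ[𝓝 x]
      fun y => f y • fderiv ℝ g y + g y • fderiv ℝ f y :=
    (hf'.and hg').mono fun y hy => fderiv_fun_mul hy.1 hy.2
  rw [iteratedFDeriv_two_apply, hDfg.fderiv_eq,
    fderiv_fun_add (f := fun y => f y • fderiv ℝ g y) (g := fun y => g y • fderiv ℝ f y)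
      (hf'.self_of_nhds.smul hDg) (hg'.self_of_nhds.smul hDf),
    fderiv_fun_smul hf'.self_of_nhds hDg, fderiv_fun_smul hg'.self_of_nhds hDf,
    iteratedFDeriv_two_apply, iteratedFDeriv_two_apply]
  simp only [Matrix.cons_val_zero, Matrix.cons_val_one, add_apply,
    smul_apply, ContinuousLinearMap.smulRight_apply, smul_eq_mul]
  ring

section ComplexLine

variable {E F : Type*} [NormedAddCommGroup E] [NormedSpace ℂ E]
  [NormedAddCommGroup F] [NormedSpace ℂ F]

theorem hasFDerivAt_complexLine (z v : E) :
    HasFDerivAt (fun w : ℂ => z + w • v) ((ContinuousLinearMap.id ℝ ℂ).smulRight v) 0 :=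
  ((ContinuousLinearMap.id ℝ ℂ).smulRight v).hasFDerivAt.const_add z

theorem ContDiffAt.comp_complexLine {ρ : E → ℝ} {z : E} {n : WithTop ℕ∞}
    (hρ : ContDiffAt ℝ n ρ z) (v : E) : ContDiffAt ℝ n (fun w : ℂ => ρ (z + w • v)) 0 := by
  have hline : ContDiff ℝ n (fun w : ℂ => z + w • v) :=
    contDiff_const.add ((ContinuousLinearMap.id ℝ ℂ).smulRight v).contDiff
  exact ContDiffAt.comp (g := ρ) 0 (by simpa using hρ) hline.contDiffAt

theorem fderiv_comp_complexLine_apply {ρ : E → ℝ} {z : E} (hρ : DifferentiableAt ℝ ρ z)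
    (v : E) (u : ℂ) :
    fderiv ℝ (fun w : ℂ => ρ (z + w • v)) 0 u = fderiv ℝ ρ z (u • v) := by
  have hρ' : HasFDerivAt ρ (fderiv ℝ ρ z) (z + (0 : ℂ) • v) := by simpa using hρ.hasFDerivAt
  rw [show (fun w : ℂ => ρ (z + w • v)) = ρ ∘ fun w : ℂ => z + w • v from rfl,
    (hρ'.comp (0 : ℂ) (hasFDerivAt_complexLine z v)).fderiv]
  simp

theorem leviForm_add_const (ρ : E → ℝ) (c : ℝ) (z v : E) :
    leviForm (fun y => ρ y + c) z v = leviForm ρ z v := by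
  have hD : (fderiv ℝ fun w : ℂ => ρ (z + w • v) + c) = fderiv ℝ fun w : ℂ => ρ (z + w • v) :=
    funext fun _ => fderiv_add_const c
  simp only [leviForm, iteratedFDeriv_two_apply, hD]

theorem leviForm_sub_const (ρ : E → ℝ) (c : ℝ) (z v : E) :
    leviForm (fun y => ρ y - c) z v = leviForm ρ z v := by
  simpa only [sub_eq_add_neg] using leviForm_add_const ρ (-c) z v

theorem leviForm_neg (ρ : E → ℝ) (z v : E) :
    leviForm (fun y => -ρ y) z v = -leviForm ρ z v := by
  rw [leviForm, leviForm, show (fun w : ℂ => -ρ (z + w • v)) = -fun w => ρ (z + w • v) from rfl,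
    iteratedFDeriv_neg_apply]
  simp only [neg_apply, neg_add]

theorem leviForm_prod_mul {f : E → ℝ} {g : F → ℝ} {x : E × F}
    (hf : ContDiffAt ℝ 2 f x.1) (hg : ContDiffAt ℝ 2 g x.2) (v : E × F) :
    leviForm (fun y : E × F => f y.1 * g y.2) x v =
      f x.1 * leviForm g x.2 v.2 + g x.2 * leviForm f x.1 v.1 +
        2 * (fderiv ℝ f x.1 v.1 * fderiv ℝ g x.2 v.2 +
          fderiv ℝ f x.1 (I • v.1) * fderiv ℝ g x.2 (I • v.2)) := by
  have hf' := hf.comp_complexLine v.1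
  have hg' := hg.comp_complexLine v.2
  simp only [leviForm, Prod.fst_add, Prod.snd_add, Prod.smul_fst, Prod.smul_snd]
  rw [iteratedFDeriv_two_mul_apply_diag hf' hg', iteratedFDeriv_two_mul_apply_diag hf' hg']
  simp only [fderiv_comp_complexLine_apply (hf.differentiableAt two_ne_zero),
    fderiv_comp_complexLine_apply (hg.differentiableAt two_ne_zero), zero_smul, add_zero,
    one_smul]
  ring

theorem ContinuousLinearMap.sq_apply_add_sq_apply_I_smul_le (ℓ : E →L[ℝ] ℝ) (v : E) :
    ℓ v ^ 2 + ℓ (I • v) ^ 2 ≤ (‖ℓ‖ * ‖v‖) ^ 2 := by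
  set a := ℓ v
  set b := ℓ (I • v)
  set c : ℂ := a + b * I
  have hc : ℓ (c • v) = a ^ 2 + b ^ 2 := by
    have : c • v = a • v + b • (I • v) := by
      rw [add_smul, mul_smul]
      norm_num [Complex.coe_smul]
    rw [this, map_add, map_smul, map_smul, smul_eq_mul, smul_eq_mul]
    ring
  have hnorm : ‖c‖ ^ 2 = a ^ 2 + b ^ 2 := by
    simp [c, Complex.sq_norm, Complex.normSq_apply]
    ring
  have hle : ‖c‖ ^ 2 ≤ ‖ℓ‖ * ‖v‖ * ‖c‖ := by
    calc ‖c‖ ^ 2 = ℓ (c • v) := by rw [hc, hnorm]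
      _ ≤ ‖ℓ‖ * ‖c • v‖ := (le_abs_self _).trans (ℓ.le_opNorm _)
      _ = ‖ℓ‖ * ‖v‖ * ‖c‖ := by rw [norm_smul]; ring
  nlinarith [norm_nonneg c, mul_nonneg (norm_nonneg ℓ) (norm_nonneg v)]

end ComplexLine

theorem abs_mul_add_mul_le_of_sq_add_sq_le {a b a' b' M M' : ℝ} (hM : 0 ≤ M) (hM' : 0 ≤ M')
    (h : a ^ 2 + b ^ 2 ≤ M ^ 2) (h' : a' ^ 2 + b' ^ 2 ≤ M' ^ 2) :
    |a * a' + b * b'| ≤ M * M' := by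
  refine abs_le_of_sq_le_sq ?_ (mul_nonneg hM hM')
  nlinarith [sq_nonneg (a * b' - b * a'), sq_nonneg a, sq_nonneg b, sq_nonneg a', sq_nonneg b']

theorem mul_add_mul_add_two_mul_nonneg {K a b s t P Q c : ℝ} (ha : K ^ 2 ≤ a) (hb : K ^ 2 ≤ b)
    (hP : s ^ 2 ≤ P) (hQ : t ^ 2 ≤ Q) (hc : |c| ≤ K * s * (K * t)) :
    0 ≤ a * Q + b * P + 2 * c := by
  have hc' := (abs_le.mp hc).1
  nlinarith [mul_nonneg (sub_nonneg.mpr ha) ((sq_nonneg t).trans hQ),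
    mul_nonneg (sub_nonneg.mpr hb) ((sq_nonneg s).trans hP),
    mul_le_mul_of_nonneg_left hQ (sq_nonneg K), mul_le_mul_of_nonneg_left hP (sq_nonneg K),
    mul_nonneg (sq_nonneg K) (sq_nonneg (s - t))]

theorem stmt_7_general (k : ℕ)
    (D : Set (EuclideanSpace ℂ (Fin k)))
    (K : ℝ)
    (U : Set (EuclideanSpace ℂ (Fin k))) (hU : IsOpen U) (hDU : closure D ⊆ U)
    (φ ψ : EuclideanSpace ℂ (Fin k) → ℝ)
    (hφ : ContDiffOn ℝ 2 φ U) (hψ : ContDiffOn ℝ 2 ψ U)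
    (hφb : ∀ z ∈ D, |φ z| ≤ K) (hψb : ∀ z ∈ D, |ψ z| ≤ K)
    (hφd : ∀ z ∈ D, ‖fderiv ℝ φ z‖ ≤ K) (hψd : ∀ z ∈ D, ‖fderiv ℝ ψ z‖ ≤ K)
    (hφL : ∀ z ∈ D, ∀ v, ‖v‖ ^ 2 ≤ leviForm φ z v)
    (hψL : ∀ z ∈ D, ∀ v, ‖v‖ ^ 2 ≤ leviForm ψ z v) :
    ∀ A : ℝ, K + K ^ 2 ≤ A → ∀ x ∈ D ×ˢ D,
      ∀ w : EuclideanSpace ℂ (Fin k) × EuclideanSpace ℂ (Fin k),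
        0 ≤ leviForm (fun y : EuclideanSpace ℂ (Fin k) × EuclideanSpace ℂ (Fin k) =>
              (φ y.1 + A) * (ψ y.2 + A)) x w ∧
        0 ≤ leviForm (fun y : EuclideanSpace ℂ (Fin k) × EuclideanSpace ℂ (Fin k) =>
              (-φ y.1 + A) * (ψ y.2 - A)) x w := by
  rintro A hA x ⟨hx₁, hx₂⟩ w
  have hφx : ContDiffAt ℝ 2 φ x.1 := hφ.contDiffAt (hU.mem_nhds (hDU (subset_closure hx₁)))
  have hψx : ContDiffAt ℝ 2 ψ x.2 := hψ.contDiffAt (hU.mem_nhds (hDU (subset_closure hx₂)))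
  have hφ₁ := abs_le.mp (hφb x.1 hx₁)
  have hψ₂ := abs_le.mp (hψb x.2 hx₂)
  have hcross : |fderiv ℝ φ x.1 w.1 * fderiv ℝ ψ x.2 w.2 +
      fderiv ℝ φ x.1 (I • w.1) * fderiv ℝ ψ x.2 (I • w.2)| ≤ K * ‖w.1‖ * (K * ‖w.2‖) := by
    have hK : 0 ≤ K := (norm_nonneg _).trans (hφd x.1 hx₁)
    refine abs_mul_add_mul_le_of_sq_add_sq_le (by positivity) (by positivity)
      ((ContinuousLinearMap.sq_apply_add_sq_apply_I_smul_le _ w.1).trans ?_)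
      ((ContinuousLinearMap.sq_apply_add_sq_apply_I_smul_le _ w.2).trans ?_)
    all_goals gcongr
    exacts [hφd x.1 hx₁, hψd x.2 hx₂]
  constructor
  · rw [leviForm_prod_mul (hφx.add contDiffAt_const) (hψx.add contDiffAt_const)]
    simp only [leviForm_add_const, fderiv_add_const]
    exact mul_add_mul_add_two_mul_nonneg (by linarith) (by linarith) (hφL x.1 hx₁ w.1)
      (hψL x.2 hx₂ w.2) hcross
  · rw [leviForm_prod_mul (hφx.neg.add contDiffAt_const) (hψx.sub contDiffAt_const)]
    simp only [leviForm_add_const, leviForm_sub_const, leviForm_neg, fderiv_add_const,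
      fderiv_sub_const, fderiv_fun_neg, neg_apply]
    have := mul_add_mul_add_two_mul_nonneg (a := -φ x.1 + A) (b := A - ψ x.2) (by linarith)
      (by linarith) (hφL x.1 hx₁ w.1) (hψL x.2 hx₂ w.2) ((abs_neg _).trans_le hcross)
    linarith

/-- **Plurisubharmonicity of products of shifted observables.** If `φ, ψ` are `C²` on a
neighborhood of `closure D`, bounded by `K` together with their first derivatives on `D`, and
have Levi forms bounded below by `‖v‖²` on `D`, then for every `A ≥ K + K²` the functions
`(z,z') ↦ (φ(z)+A)(ψ(z')+A)` and `(z,z') ↦ (−φ(z)+A)(ψ(z')−A)` have nonnegative Levi form at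
every point of `D × D`, i.e. they are plurisubharmonic on `D × D`. -/
theorem stmt_7 (k : ℕ) (hk : 1 ≤ k)
    (D : Set (EuclideanSpace ℂ (Fin k))) (hD : IsOpen D) (hDb : Bornology.IsBounded D)
    (K : ℝ) (hK : 0 < K)
    (U : Set (EuclideanSpace ℂ (Fin k))) (hU : IsOpen U) (hDU : closure D ⊆ U)
    (φ ψ : EuclideanSpace ℂ (Fin k) → ℝ)
    (hφ : ContDiffOn ℝ 2 φ U) (hψ : ContDiffOn ℝ 2 ψ U)
    (hφb : ∀ z ∈ D, |φ z| ≤ K) (hψb : ∀ z ∈ D, |ψ z| ≤ K)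
    (hφd : ∀ z ∈ D, ‖fderiv ℝ φ z‖ ≤ K) (hψd : ∀ z ∈ D, ‖fderiv ℝ ψ z‖ ≤ K)
    (hφL : ∀ z ∈ D, ∀ v, ‖v‖ ^ 2 ≤ leviForm φ z v)
    (hψL : ∀ z ∈ D, ∀ v, ‖v‖ ^ 2 ≤ leviForm ψ z v) :
    ∀ A : ℝ, K + K ^ 2 ≤ A → ∀ x ∈ D ×ˢ D,
      ∀ w : EuclideanSpace ℂ (Fin k) × EuclideanSpace ℂ (Fin k),
        0 ≤ leviForm (fun y : EuclideanSpace ℂ (Fin k) × EuclideanSpace ℂ (Fin k) =>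
              (φ y.1 + A) * (ψ y.2 + A)) x w ∧
        0 ≤ leviForm (fun y : EuclideanSpace ℂ (Fin k) × EuclideanSpace ℂ (Fin k) =>
              (-φ y.1 + A) * (ψ y.2 - A)) x w :=
  stmt_7_general k D K U hU hDU φ ψ hφ hψ hφb hψb hφd hψd hφL hψL
end

section
/- Let M ⊆ ℂ^p and N ⊆ ℂ^{k−p} be nonempty bounded open sets and D := M × N. Let U ⊆ D be open and f : U → D be a continuous map whose graph {(z, f(z)) : z ∈ U} is closed in D × D, and suppose f(U) ⊆ M × N₀ for some open set N₀ whose closure is contained in N. Then for every sequence (z_i) in U converging to a point z ∈ D ∖ U, the sequence (f(z_i)) is bounded, every cluster value of (f(z_i)) lies in ∂M × closure(N₀), and in particular the distance from f(z_i) to the set ∂M × ℂ^{k−p} tends to 0. -/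
open Filter

/-- **Boundary behaviour of a map with horizontal image and closed graph.** If `f : U → D` is
continuous with graph closed in `D × D` and `f(U) ⊆ M × N₀` with `closure N₀ ⊆ N`, then for any
sequence `(z_i)` in `U` converging to a point of `D ∖ U`, the sequence `(f(z_i))` is bounded,
all its cluster values lie in `∂M × closure N₀`, and `dist(f(z_i), ∂M × ℂ^{k−p}) → 0`. -/
theorem stmt_10 (k p : ℕ) (hp : 1 ≤ p) (hpk : p < k)
    (M : Set (EuclideanSpace ℂ (Fin p))) (N : Set (EuclideanSpace ℂ (Fin (k - p))))
    (hM : IsOpen M) (hMne : M.Nonempty) (hMb : Bornology.IsBounded M)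
    (hN : IsOpen N) (hNne : N.Nonempty) (hNb : Bornology.IsBounded N)
    (U : Set (EuclideanSpace ℂ (Fin p) × EuclideanSpace ℂ (Fin (k - p))))
    (hU : IsOpen U) (hUD : U ⊆ M ×ˢ N)
    (f : EuclideanSpace ℂ (Fin p) × EuclideanSpace ℂ (Fin (k - p)) →
      EuclideanSpace ℂ (Fin p) × EuclideanSpace ℂ (Fin (k - p)))
    (hfc : ContinuousOn f U) (hfD : f '' U ⊆ M ×ˢ N)
    (hgraph : closure ((fun z => (z, f z)) '' U) ∩ ((M ×ˢ N) ×ˢ (M ×ˢ N)) ⊆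
      (fun z => (z, f z)) '' U)
    (N₀ : Set (EuclideanSpace ℂ (Fin (k - p)))) (hN₀ : IsOpen N₀) (hN₀N : closure N₀ ⊆ N)
    (hfU : f '' U ⊆ M ×ˢ N₀)
    (z : ℕ → EuclideanSpace ℂ (Fin p) × EuclideanSpace ℂ (Fin (k - p)))
    (hz : ∀ i, z i ∈ U)
    (z₀ : EuclideanSpace ℂ (Fin p) × EuclideanSpace ℂ (Fin (k - p)))
    (hz₀ : z₀ ∈ (M ×ˢ N) \ U)
    (hlim : Tendsto z atTop (nhds z₀)) :
    Bornology.IsBounded (Set.range fun i => f (z i)) ∧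
    (∀ w, MapClusterPt w atTop (fun i => f (z i)) → w ∈ (frontier M) ×ˢ closure N₀) ∧
    Tendsto (fun i => Metric.infDist (f (z i))
        ((frontier M) ×ˢ (Set.univ : Set (EuclideanSpace ℂ (Fin (k - p)))))) atTop (nhds 0) := by

  have hN₀b : Bornology.IsBounded N₀ := hNb.subset (Set.Subset.trans subset_closure hN₀N)
  have hmemMN₀ : ∀ i, f (z i) ∈ M ×ˢ N₀ := fun i => hfU ⟨z i, hz i, rfl⟩
  have key : ∀ w, MapClusterPt w atTop (fun i => f (z i)) → w ∈ (frontier M) ×ˢ closure N₀ := by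
    intro w hw
    have hwcl : w ∈ closure (M ×ˢ N₀) :=
      mem_closure_iff_clusterPt.2 (hw.clusterPt.mono (le_principal_iff.2
        (Filter.mem_map.2 (Filter.Eventually.of_forall hmemMN₀))))
    rw [closure_prod_eq] at hwcl
    have hne : (atTop ⊓ comap (fun i => f (z i)) (nhds w)).NeBot := by
      rw [MapClusterPt, ClusterPt] at hw
      rw [← Filter.map_neBot_iff (fun i => f (z i)), Filter.push_pull, inf_comm]
      exact hw
    have h1 : Tendsto z (atTop ⊓ comap (fun i => f (z i)) (nhds w)) (nhds z₀) :=
      hlim.mono_left inf_le_left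
    have h2 : Tendsto (fun i => f (z i)) (atTop ⊓ comap (fun i => f (z i)) (nhds w)) (nhds w) :=
      tendsto_comap.mono_left inf_le_right
    have hpair : MapClusterPt (z₀, w) atTop (fun i => (z i, f (z i))) :=
      ((h1.prodMk_nhds h2).mapClusterPt).mono inf_le_left
    have hclG : (z₀, w) ∈ closure ((fun u => (u, f u)) '' U) :=
      mem_closure_iff_clusterPt.2 (hpair.clusterPt.mono (le_principal_iff.2
        (Filter.mem_map.2 (Filter.Eventually.of_forall (fun i => ⟨z i, hz i, rfl⟩)))))
    have hw2N : w.2 ∈ N := hN₀N hwcl.2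
    have hw1 : w.1 ∉ M := by
      intro hw1
      have hmem : (z₀, w) ∈ (M ×ˢ N) ×ˢ (M ×ˢ N) := ⟨hz₀.1, hw1, hw2N⟩
      obtain ⟨u, hu, huv⟩ := hgraph ⟨hclG, hmem⟩
      have : u = z₀ := congrArg Prod.fst huv
      exact hz₀.2 (this ▸ hu)
    exact ⟨hM.frontier_eq ▸ ⟨hwcl.1, hw1⟩, hwcl.2⟩
  refine ⟨(hMb.prod hN₀b).subset (Set.range_subset_iff.2 hmemMN₀), key, ?_⟩
  have hK : IsCompact (closure (M ×ˢ N₀)) := (hMb.prod hN₀b).isCompact_closure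
  refine tendsto_of_subseq_tendsto fun ns hns => ?_
  have hmem : ∀ n, f (z (ns n)) ∈ closure (M ×ˢ N₀) := fun n => subset_closure (hmemMN₀ (ns n))
  obtain ⟨w, hwK, ms, hms, hlim2⟩ := hK.tendsto_subseq hmem
  have hwfr : w ∈ (frontier M) ×ˢ closure N₀ := by
    refine key w (MapClusterPt.of_comp (p := atTop) (φ := fun n => ns (ms n))
      (hns.comp hms.tendsto_atTop) ?_)
    exact hlim2.mapClusterPt
  refine ⟨ms, ?_⟩
  have hcont : Tendsto (fun n => Metric.infDist (f (z (ns (ms n))))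
      ((frontier M) ×ˢ (Set.univ : Set (EuclideanSpace ℂ (Fin (k - p)))))) atTop
      (nhds (Metric.infDist w ((frontier M) ×ˢ (Set.univ : Set (EuclideanSpace ℂ (Fin (k - p))))))) :=
    ((Metric.continuous_infDist_pt _).tendsto w).comp hlim2
  rwa [Metric.infDist_zero_of_mem (s := (frontier M) ×ˢ (Set.univ : Set (EuclideanSpace ℂ (Fin (k - p))))) ⟨hwfr.1, Set.mem_univ _⟩] at hcont
end

section
/- Let M ⊆ ℂ^p and N ⊆ ℂ^{k−p} be nonempty bounded open sets, D := M × N, and let f : U → V be an invertible horizontal-like map on D with witnesses M₀, N₀ (so U ⊆ M₀ × N and V ⊆ M × N₀). Define U_0 := D and U_{n+1} := {z ∈ U : f(z) ∈ U_n}, and set 𝒦₊ := ⋂_{n≥0} U_n; define W_0 := D and W_{n+1} := f(W_n ∩ U), and set 𝒦₋ := ⋂_{n≥0} W_n. Then: (a) 𝒦₊ is closed in D and contained in M₀ × N; (b) 𝒦₋ is closed in D and contained in M × N₀; (c) {z ∈ U : f(z) ∈ 𝒦₊} = 𝒦₊, 𝒦₋ ⊆ V, and f(𝒦₋ ∩ U)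 = 𝒦₋; (d) 𝒦 := 𝒦₊ ∩ 𝒦₋ is a compact subset of D and f(𝒦) = 𝒦. -/
/-- An invertible horizontal-like map on `D = M × N`: a biholomorphism `f : U → V` between
nonempty open subsets of `D` (encoded as an injective holomorphic map with `f '' U = V`), whose
graph is closed in `D × D`, and such that `U ⊆ M₀ × N` and `V ⊆ M × N₀` for some open sets
`M₀ ⋐ M`, `N₀ ⋐ N`. -/
def InvHorizLike {p q : ℕ} (M : Set (EuclideanSpace ℂ (Fin p))) (N : Set (EuclideanSpace ℂ (Fin q)))
    (f : EuclideanSpace ℂ (Fin p) × EuclideanSpace ℂ (Fin q) →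
      EuclideanSpace ℂ (Fin p) × EuclideanSpace ℂ (Fin q))
    (U V : Set (EuclideanSpace ℂ (Fin p) × EuclideanSpace ℂ (Fin q))) : Prop :=
  IsOpen U ∧ IsOpen V ∧ U.Nonempty ∧ V.Nonempty ∧ U ⊆ M ×ˢ N ∧ V ⊆ M ×ˢ N ∧
  DifferentiableOn ℂ f U ∧ Set.InjOn f U ∧ f '' U = V ∧
  closure ((fun z => (z, f z)) '' U) ∩ ((M ×ˢ N) ×ˢ (M ×ˢ N)) ⊆ (fun z => (z, f z)) '' U ∧
  ∃ M₀ N₀, IsOpen M₀ ∧ IsOpen N₀ ∧ IsCompact (closure M₀) ∧ closure M₀ ⊆ M ∧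
    IsCompact (closure N₀) ∧ closure N₀ ⊆ N ∧ U ⊆ M₀ ×ˢ N ∧ V ⊆ M ×ˢ N₀

/-- **Filled Julia sets of an invertible horizontal-like map.** With `U_0 = D`,
`U_{n+1} = {z ∈ U : f(z) ∈ U_n}`, `𝒦₊ = ⋂ U_n`, and `W_0 = D`, `W_{n+1} = f(W_n ∩ U)`,
`𝒦₋ = ⋂ W_n`: (a) `𝒦₊` is closed in `D` and vertical (contained in `M₀ × N`); (b) `𝒦₋` is
closed in `D` and horizontal (contained in `M × N₀`); (c) `f⁻¹(𝒦₊) = 𝒦₊`, `𝒦₋ ⊆ V` and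
`f(𝒦₋ ∩ U) = 𝒦₋`; (d) `𝒦 = 𝒦₊ ∩ 𝒦₋` is a compact subset of `D` with `f(𝒦) = 𝒦`. -/
theorem stmt_13 (k p : ℕ) (hp : 1 ≤ p) (hpk : p < k)
    (M M₀ : Set (EuclideanSpace ℂ (Fin p))) (N N₀ : Set (EuclideanSpace ℂ (Fin (k - p))))
    (hM : IsOpen M) (hMne : M.Nonempty) (hMb : Bornology.IsBounded M)
    (hN : IsOpen N) (hNne : N.Nonempty) (hNb : Bornology.IsBounded N)
    (f : EuclideanSpace ℂ (Fin p) × EuclideanSpace ℂ (Fin (k - p)) →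
      EuclideanSpace ℂ (Fin p) × EuclideanSpace ℂ (Fin (k - p)))
    (U V : Set (EuclideanSpace ℂ (Fin p) × EuclideanSpace ℂ (Fin (k - p))))
    (hf : InvHorizLike M N f U V) (hU : U ⊆ M₀ ×ˢ N) (hV : V ⊆ M ×ˢ N₀)
    (hM₀ : IsOpen M₀) (hM₀c : IsCompact (closure M₀)) (hM₀M : closure M₀ ⊆ M)
    (hN₀ : IsOpen N₀) (hN₀c : IsCompact (closure N₀)) (hN₀N : closure N₀ ⊆ N)
    (Useq Wseq : ℕ → Set (EuclideanSpace ℂ (Fin p) × EuclideanSpace ℂ (Fin (k - p))))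
    (hU0 : Useq 0 = M ×ˢ N) (hUs : ∀ n, Useq (n + 1) = {z ∈ U | f z ∈ Useq n})
    (hW0 : Wseq 0 = M ×ˢ N) (hWs : ∀ n, Wseq (n + 1) = f '' (Wseq n ∩ U)) :
    (closure (⋂ n, Useq n) ∩ (M ×ˢ N) ⊆ ⋂ n, Useq n ∧ (⋂ n, Useq n) ⊆ M₀ ×ˢ N) ∧
    (closure (⋂ n, Wseq n) ∩ (M ×ˢ N) ⊆ ⋂ n, Wseq n ∧ (⋂ n, Wseq n) ⊆ M ×ˢ N₀) ∧
    ({z ∈ U | f z ∈ ⋂ n, Useq n} = ⋂ n, Useq n ∧ (⋂ n, Wseq n) ⊆ V ∧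
      f '' ((⋂ n, Wseq n) ∩ U) = ⋂ n, Wseq n) ∧
    (IsCompact ((⋂ n, Useq n) ∩ ⋂ n, Wseq n) ∧ ((⋂ n, Useq n) ∩ ⋂ n, Wseq n) ⊆ M ×ˢ N ∧
      f '' ((⋂ n, Useq n) ∩ ⋂ n, Wseq n) = (⋂ n, Useq n) ∩ ⋂ n, Wseq n) := by
  classical
  obtain ⟨hUo, hVo, hUne, hVne, hUD, hVD, hdiff, hinj, hfUV, hgr, -⟩ := hf
  -- basic facts about 𝒦₊
  have hKpU : (⋂ n, Useq n) ⊆ U := by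
    intro z hz
    have h1 : z ∈ Useq 1 := Set.mem_iInter.1 hz 1
    rw [hUs 0] at h1
    exact h1.1
  have hfKp : ∀ z ∈ ⋂ n, Useq n, f z ∈ ⋂ n, Useq n := by
    intro z hz
    refine Set.mem_iInter.2 fun n => ?_
    have h1 : z ∈ Useq (n + 1) := Set.mem_iInter.1 hz (n + 1)
    rw [hUs n] at h1
    exact h1.2
  have hc1 : {z ∈ U | f z ∈ ⋂ n, Useq n} = ⋂ n, Useq n := by
    ext z
    constructor
    · rintro ⟨hzU, hzf⟩
      refine Set.mem_iInter.2 fun n => ?_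
      cases n with
      | zero => rw [hU0]; exact hUD hzU
      | succ m => rw [hUs m]; exact ⟨hzU, Set.mem_iInter.1 hzf m⟩
    · intro hz
      exact ⟨hKpU hz, hfKp z hz⟩
  -- basic facts about 𝒦₋
  have hUinter : (M ×ˢ N) ∩ U = U := Set.inter_eq_self_of_subset_right hUD
  have hW1 : Wseq 1 = V := by rw [hWs 0, hW0, hUinter, hfUV]
  have hWdec : ∀ n, Wseq (n + 1) ⊆ Wseq n := by
    intro n
    induction n with
    | zero => rw [hW1, hW0]; exact hVD
    | succ m ih =>
      calc Wseq (m + 2) = f '' (Wseq (m + 1) ∩ U) := hWs (m + 1)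
        _ ⊆ f '' (Wseq m ∩ U) := Set.image_mono (Set.inter_subset_inter_left _ ih)
        _ = Wseq (m + 1) := (hWs m).symm
  have hKmV : (⋂ n, Wseq n) ⊆ V := fun z hz => hW1 ▸ Set.mem_iInter.1 hz 1
  have hKmMN₀ : (⋂ n, Wseq n) ⊆ M ×ˢ N₀ := fun z hz => hV (hKmV hz)
  have hc3 : f '' ((⋂ n, Wseq n) ∩ U) = ⋂ n, Wseq n := by
    apply Set.Subset.antisymm
    · rintro z ⟨w, ⟨hwKm, hwU⟩, rfl⟩
      refine Set.mem_iInter.2 fun n => hWdec n ?_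
      rw [hWs n]
      exact ⟨w, ⟨Set.mem_iInter.1 hwKm n, hwU⟩, rfl⟩
    · intro z hz
      have h1 : z ∈ Wseq 1 := Set.mem_iInter.1 hz 1
      rw [hWs 0] at h1
      obtain ⟨w, ⟨-, hwU⟩, hfw⟩ := h1
      refine ⟨w, ⟨Set.mem_iInter.2 fun n => ?_, hwU⟩, hfw⟩
      have h2 : z ∈ Wseq (n + 1) := Set.mem_iInter.1 hz (n + 1)
      rw [hWs n] at h2
      obtain ⟨w', ⟨hw', hw'U⟩, hfw'⟩ := h2
      rwa [hinj hw'U hwU (hfw'.trans hfw.symm)] at hw'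
  -- the graph-closedness argument
  have hgraph : ∀ z w : EuclideanSpace ℂ (Fin p) × EuclideanSpace ℂ (Fin (k - p)),
      z ∈ M ×ˢ N → w ∈ M ×ˢ N →
      ∀ x : ℕ → EuclideanSpace ℂ (Fin p) × EuclideanSpace ℂ (Fin (k - p)),
      (∀ j, x j ∈ U) → Filter.Tendsto x Filter.atTop (nhds z) →
      Filter.Tendsto (fun j => f (x j)) Filter.atTop (nhds w) → z ∈ U ∧ f z = w := by
    intro z w hz hw x hxU hx1 hx2
    have hcl : (z, w) ∈ closure ((fun z => (z, f z)) '' U) :=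
      mem_closure_of_tendsto (hx1.prodMk_nhds hx2)
        (Filter.Eventually.of_forall fun j => Set.mem_image_of_mem _ (hxU j))
    obtain ⟨u, huU, huv⟩ := hgr ⟨hcl, hz, hw⟩
    obtain ⟨rfl, h2⟩ := Prod.ext_iff.1 huv
    exact ⟨huU, h2⟩
  have hKcomp : IsCompact (closure M₀ ×ˢ closure N₀) := hM₀c.prod hN₀c
  have hKD : (closure M₀ ×ˢ closure N₀ :
      Set (EuclideanSpace ℂ (Fin p) × EuclideanSpace ℂ (Fin (k - p)))) ⊆ M ×ˢ N :=
    Set.prod_mono hM₀M hN₀N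
  -- (a) 𝒦₊ is closed in D
  have ha1 : closure (⋂ n, Useq n) ∩ (M ×ˢ N) ⊆ ⋂ n, Useq n := by
    have key : ∀ n, closure (⋂ n, Useq n) ∩ (M ×ˢ N) ⊆ Useq n := by
      intro n
      induction n with
      | zero => rw [hU0]; exact Set.inter_subset_right
      | succ m ih =>
        rintro z ⟨hzc, hzD⟩
        obtain ⟨x, hx, hxlim⟩ := mem_closure_iff_seq_limit.1 hzc
        have hfx : ∀ j, f (x j) ∈ closure M₀ ×ˢ closure N₀ := by
          intro j
          have h1 : f (x j) ∈ ⋂ n, Useq n := hfKp _ (hx j)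
          have h2 : f (x j) ∈ V := hfUV ▸ Set.mem_image_of_mem f (hKpU (hx j))
          exact ⟨subset_closure (hU (hKpU h1)).1, subset_closure (hV h2).2⟩
        obtain ⟨w, hwK, φ, hφ, hwlim⟩ := hKcomp.tendsto_subseq hfx
        have hwD : w ∈ M ×ˢ N := hKD hwK
        have hwc : w ∈ closure (⋂ n, Useq n) :=
          mem_closure_of_tendsto hwlim
            (Filter.Eventually.of_forall fun j => hfKp _ (hx (φ j)))
        obtain ⟨hzU, hfz⟩ := hgraph z w hzD hwD (x ∘ φ) (fun j => hKpU (hx (φ j)))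
          (hxlim.comp hφ.tendsto_atTop) hwlim
        rw [hUs m]
        exact ⟨hzU, hfz ▸ ih ⟨hwc, hwD⟩⟩
    exact fun z hz => Set.mem_iInter.2 fun n => key n hz
  -- (b) 𝒦₋ is closed in D
  have hb1 : closure (⋂ n, Wseq n) ∩ (M ×ˢ N) ⊆ ⋂ n, Wseq n := by
    have key : ∀ n, closure (⋂ n, Wseq n) ∩ (M ×ˢ N) ⊆ Wseq n := by
      intro n
      induction n with
      | zero => rw [hW0]; exact Set.inter_subset_right
      | succ m ih =>
        rintro z ⟨hzc, hzD⟩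
        obtain ⟨x, hx, hxlim⟩ := mem_closure_iff_seq_limit.1 hzc
        have hpre : ∀ j, ∃ w, (w ∈ (⋂ n, Wseq n) ∧ w ∈ U) ∧ f w = x j := by
          intro j
          have h1 : x j ∈ f '' ((⋂ n, Wseq n) ∩ U) := hc3.symm ▸ hx j
          obtain ⟨w, hw, hfw⟩ := h1
          exact ⟨w, hw, hfw⟩
        choose ws hws hfws using hpre
        have hwsK : ∀ j, ws j ∈ closure M₀ ×ˢ closure N₀ := fun j =>
          ⟨subset_closure (hU (hws j).2).1, subset_closure (hKmMN₀ (hws j).1).2⟩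
        obtain ⟨u, huK, φ, hφ, hulim⟩ := hKcomp.tendsto_subseq hwsK
        have huD : u ∈ M ×ˢ N := hKD huK
        have huc : u ∈ closure (⋂ n, Wseq n) :=
          mem_closure_of_tendsto hulim
            (Filter.Eventually.of_forall fun j => (hws (φ j)).1)
        have hflim : Filter.Tendsto (fun j => f ((ws ∘ φ) j)) Filter.atTop (nhds z) := by
          have heq : (fun j => f ((ws ∘ φ) j)) = x ∘ φ := funext fun j => hfws (φ j)
          rw [heq]
          exact hxlim.comp hφ.tendsto_atTop
        obtain ⟨huU, hfu⟩ := hgraph u z huD hzD (ws ∘ φ) (fun j => (hws (φ j)).2)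
          hulim hflim
        rw [hWs m]
        exact ⟨u, ⟨ih ⟨huc, huD⟩, huU⟩, hfu⟩
    exact fun z hz => Set.mem_iInter.2 fun n => key n hz
  -- (d)
  have hKpMN : (⋂ n, Useq n) ⊆ M ×ˢ N := fun z hz => hU0 ▸ Set.mem_iInter.1 hz 0
  have hsub : (⋂ n, Useq n) ∩ (⋂ n, Wseq n) ⊆ closure M₀ ×ˢ closure N₀ := by
    rintro z ⟨h1, h2⟩
    exact ⟨subset_closure (hU (hKpU h1)).1, subset_closure (hKmMN₀ h2).2⟩
  have hclosed : IsClosed ((⋂ n, Useq n) ∩ ⋂ n, Wseq n) := by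
    apply isClosed_of_closure_subset
    intro z hz
    have hzK : z ∈ closure M₀ ×ˢ closure N₀ :=
      (hKcomp.isClosed.closure_subset_iff.2 hsub) hz
    have hzD : z ∈ M ×ˢ N := hKD hzK
    exact ⟨ha1 ⟨closure_mono Set.inter_subset_left hz, hzD⟩,
      hb1 ⟨closure_mono Set.inter_subset_right hz, hzD⟩⟩
  have hd3 : f '' ((⋂ n, Useq n) ∩ ⋂ n, Wseq n) = (⋂ n, Useq n) ∩ ⋂ n, Wseq n := by
    apply Set.Subset.antisymm
    · rintro z ⟨w, ⟨hw1, hw2⟩, rfl⟩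
      exact ⟨hfKp _ hw1, hc3 ▸ Set.mem_image_of_mem f ⟨hw2, hKpU hw1⟩⟩
    · rintro z ⟨h1, h2⟩
      have h3 : z ∈ f '' ((⋂ n, Wseq n) ∩ U) := hc3.symm ▸ h2
      obtain ⟨w, ⟨hwKm, hwU⟩, hfw⟩ := h3
      have hwKp : w ∈ ⋂ n, Useq n := by
        rw [← hc1]
        exact ⟨hwU, by rw [hfw]; exact h1⟩
      exact ⟨w, ⟨hwKp, hwKm⟩, hfw⟩
  exact ⟨⟨ha1, fun z hz => hU (hKpU hz)⟩, ⟨hb1, hKmMN₀⟩, ⟨hc1, hKmV, hc3⟩,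
    hKcomp.of_isClosed_subset hclosed hsub, fun z hz => hKpMN hz.1, hd3⟩
end

section
/- Let k ≥ 1 and 0 ≤ q ≤ k be integers. There exist finitely many complex-linear subspaces E₁, …, E_N of ℂ^k, each of complex dimension k − q, and a real number θ₀ > 0, such that for every complex-linear subspace F of ℂ^k of complex dimension q there is an index i with ‖P_{E_i}(v)‖ ≤ (1 − θ₀)‖v‖ for every v ∈ F, where P_{E_i} denotes the orthogonal projection of ℂ^k onto E_i with respect to the standard Hermitian inner product. -/
/-!
Orthonormal `q`-frames of a finite-dimensional inner product space form a compact set, so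
finitely many frames `g₁, …, g_N` are `ε`-dense among them. Take `E_n = (span gₙ)ᗮ`. A
`q`-dimensional `F` has an orthonormal basis `f` within `ε` of some `gₙ`; writing
`v = ∑ ⟪fᵢ, v⟫ fᵢ` and replacing each `fᵢ` by `gₙ i` gives a vector of `span gₙ` at distance
at most `q ε ‖v‖` from `v`, and this distance bounds `‖P_{E_n} v‖`.
-/

open scoped InnerProductSpace
open Module Submodule Set

lemma IsCompact.exists_fin_net {X : Type*} [PseudoMetricSpace X] {s : Set X} (hs : IsCompact s)
    {ε : ℝ} (hε : 0 < ε) :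
    ∃ (N : ℕ) (x : Fin N → X), (∀ n, x n ∈ s) ∧ ∀ y ∈ s, ∃ n, dist y (x n) < ε := by
  obtain ⟨t, hts, hcover⟩ :=
    hs.elim_nhds_subcover (fun x => Metric.ball x ε) fun x _ => Metric.ball_mem_nhds x hε
  refine ⟨t.card, fun n => t.equivFin.symm n, fun n => hts _ (t.equivFin.symm n).2,
    fun y hy => ?_⟩
  obtain ⟨x, hx, hyx⟩ := mem_iUnion₂.1 (hcover hy)
  exact ⟨t.equivFin ⟨x, hx⟩, by simpa using hyx⟩

variable {𝕜 E : Type*} [RCLike 𝕜] [NormedAddCommGroup E] [InnerProductSpace 𝕜 E]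

lemma isCompact_setOf_orthonormal (ι : Type*) [Fintype ι] [FiniteDimensional 𝕜 E] :
    IsCompact {f : ι → E | Orthonormal 𝕜 f} := by
  classical
  have := FiniteDimensional.proper_rclike 𝕜 (ι → E)
  have hclosed : IsClosed {f : ι → E | Orthonormal 𝕜 f} := by
    simp only [orthonormal_iff_ite, ofPred_forall]
    exact isClosed_iInter fun i => isClosed_iInter fun j =>
      isClosed_eq ((continuous_apply i).inner (continuous_apply j)) continuous_const
  refine Metric.isCompact_of_isClosed_isBounded hclosed
    ((Metric.isBounded_closedBall (x := 0) (r := 1)).subset fun f hf => ?_)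
  rw [Metric.mem_closedBall, dist_zero_right]
  exact pi_norm_le_iff_of_nonneg zero_le_one |>.2 fun i => (hf.1 i).le

lemma finrank_orthogonal_span_of_orthonormal [FiniteDimensional 𝕜 E] {ι : Type*} [Fintype ι]
    {g : ι → E} (hg : Orthonormal 𝕜 g) :
    finrank 𝕜 (span 𝕜 (range g))ᗮ = finrank 𝕜 E - Fintype.card ι := by
  have := (span 𝕜 (range g)).finrank_add_finrank_orthogonal
  rw [finrank_span_eq_card hg.linearIndependent] at this
  omega

lemma norm_orthogonalProjectionOnto_orthogonal_le (K : Submodule 𝕜 E) [K.HasOrthogonalProjection]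
    (v : E) {u : E} (hu : u ∈ K) :
    ‖(Kᗮ.orthogonalProjectionOnto v : E)‖ ≤ ‖v - u‖ := by
  rw [coe_orthogonalProjectionOnto_apply, starProjection_orthogonal_val, starProjection_minimal]
  exact ciInf_le ⟨0, forall_mem_range.2 fun _ => norm_nonneg _⟩ (⟨u, hu⟩ : K)

lemma norm_orthogonalProjectionOnto_orthogonal_span_le [FiniteDimensional 𝕜 E] {ι : Type*}
    [Fintype ι] {F : Submodule 𝕜 E} (b : OrthonormalBasis ι 𝕜 F) {g : ι → E} {ε : ℝ}
    (hg : ∀ i, ‖(b i : E) - g i‖ ≤ ε) {v : E} (hv : v ∈ F) :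
    ‖((span 𝕜 (range g))ᗮ.orthogonalProjectionOnto v : E)‖ ≤ Fintype.card ι * ε * ‖v‖ := by
  set c : ι → 𝕜 := fun i => ⟪(b i : E), v⟫_𝕜
  have hv_sum : ∑ i, c i • (b i : E) = v := by
    simpa [c, Submodule.coe_inner] using congrArg ((↑) : F → E) (b.sum_repr' ⟨v, hv⟩)
  have hc : ∀ i, ‖c i‖ ≤ ‖v‖ := fun i =>
    (norm_inner_le_norm (𝕜 := 𝕜) (b i : E) v).trans_eq <| by
      rw [norm_coe, b.orthonormal.1 i, one_mul]
  have hu : ∑ i, c i • g i ∈ span 𝕜 (range g) :=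
    sum_mem fun i _ => smul_mem _ _ (subset_span (mem_range_self i))
  calc ‖((span 𝕜 (range g))ᗮ.orthogonalProjectionOnto v : E)‖
      ≤ ‖v - ∑ i, c i • g i‖ := norm_orthogonalProjectionOnto_orthogonal_le _ v hu
    _ = ‖∑ i, c i • ((b i : E) - g i)‖ := by
      simp only [smul_sub, Finset.sum_sub_distrib, hv_sum]
    _ ≤ ∑ i, ‖c i‖ * ‖(b i : E) - g i‖ := by
      simpa only [norm_smul] using norm_sum_le Finset.univ fun i => c i • ((b i : E) - g i)
    _ ≤ ∑ _i : ι, ‖v‖ * ε := by gcongr with i; exacts [hc i, hg i]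
    _ = Fintype.card ι * ε * ‖v‖ := by simp; ring

theorem exists_fin_family_norm_orthogonalProjectionOnto_le [FiniteDimensional 𝕜 E] (q : ℕ)
    {δ : ℝ} (hδ : 0 < δ) :
    ∃ (N : ℕ) (Ef : Fin N → Submodule 𝕜 E), (∀ n, finrank 𝕜 (Ef n) = finrank 𝕜 E - q) ∧
      ∀ F : Submodule 𝕜 E, finrank 𝕜 F = q →
        ∃ n, ∀ v ∈ F, ‖((Ef n).orthogonalProjectionOnto v : E)‖ ≤ δ * ‖v‖ := by
  have hε : 0 < δ / (q + 1) := by positivity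
  obtain ⟨N, g, hg, hnet⟩ :=
    (isCompact_setOf_orthonormal (𝕜 := 𝕜) (E := E) (Fin q)).exists_fin_net hε
  refine ⟨N, fun n => (span 𝕜 (range (g n)))ᗮ,
    fun n => by simpa using finrank_orthogonal_span_of_orthonormal (hg n), fun F hF => ?_⟩
  let b : OrthonormalBasis (Fin q) 𝕜 F := (stdOrthonormalBasis 𝕜 F).reindex (finCongr hF)
  obtain ⟨n, hn⟩ := hnet _ (b.orthonormal.comp_linearIsometry F.subtypeₗᵢ)
  have hclose : ∀ i, ‖(b i : E) - g n i‖ ≤ δ / (q + 1) := fun i => by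
    simpa [dist_eq_norm] using ((dist_le_pi_dist _ _ i).trans hn.le)
  refine ⟨n, fun v hv =>
    (norm_orthogonalProjectionOnto_orthogonal_span_le b hclose hv).trans ?_⟩
  rw [Fintype.card_fin]
  have hq : (q : ℝ) * (δ / (q + 1)) ≤ δ := by
    rw [mul_div_assoc', div_le_iff₀ (by positivity)]
    nlinarith
  gcongr

theorem stmt_14_general (k q : ℕ) :
    ∃ (N : ℕ) (E : Fin N → Submodule ℂ (EuclideanSpace ℂ (Fin k))) (θ₀ : ℝ),
      0 < θ₀ ∧ (∀ i, Module.finrank ℂ (E i) = k - q) ∧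
      ∀ F : Submodule ℂ (EuclideanSpace ℂ (Fin k)), Module.finrank ℂ F = q →
        ∃ i, ∀ v ∈ F,
          ‖((E i).orthogonalProjectionOnto v : EuclideanSpace ℂ (Fin k))‖ ≤ (1 - θ₀) * ‖v‖ := by
  obtain ⟨N, Ef, hdim, hproj⟩ :=
    exists_fin_family_norm_orthogonalProjectionOnto_le (𝕜 := ℂ)
      (E := EuclideanSpace ℂ (Fin k)) q (δ := 1 / 2) (by norm_num)
  refine ⟨N, Ef, 1 / 2, by norm_num, by simpa using hdim, fun F hF => ?_⟩
  obtain ⟨n, hn⟩ := hproj F hF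
  exact ⟨n, fun v hv => (hn v hv).trans_eq (by norm_num)⟩

/-- **A finite family of quantitatively transversal projections.** For `0 ≤ q ≤ k` there are
finitely many `(k−q)`-dimensional complex subspaces `E₁, …, E_N` of `ℂ^k` and `θ₀ > 0` such that
every `q`-dimensional complex subspace `F` satisfies `‖P_{E_i} v‖ ≤ (1 − θ₀)‖v‖` for all `v ∈ F`,
for at least one index `i` (i.e. `F` makes an angle at least `θ₀` with some `E_i`). -/
theorem stmt_14 (k q : ℕ) (hk : 1 ≤ k) (hq : q ≤ k) :
    ∃ (N : ℕ) (E : Fin N → Submodule ℂ (EuclideanSpace ℂ (Fin k))) (θ₀ : ℝ),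
      0 < θ₀ ∧ (∀ i, Module.finrank ℂ (E i) = k - q) ∧
      ∀ F : Submodule ℂ (EuclideanSpace ℂ (Fin k)), Module.finrank ℂ F = q →
        ∃ i, ∀ v ∈ F,
          ‖((E i).orthogonalProjectionOnto v : EuclideanSpace ℂ (Fin k))‖ ≤ (1 - θ₀) * ‖v‖ :=
  stmt_14_general k q
end
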